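/- arXiv:1106.1524 — 14 statements merged into one kernel-verified Lean document; each statement's English description precedes it below -/
import Mathlib

section
/- Let (Ω, R, P) satisfy (NAP0)–(NAP3). Assume Ω is uncountable. Then R is non-Archimedean; more precisely, there exists ω ∈ Ω such that the element ε = P({ω}) of R satisfies 0 < ε and n·ε ≤ 1 for every natural number n. -/
/-!
For each `n`, at most `n` points `ω` can satisfy `n • P {ω} > P Ω`, since otherwise finite
additivity would give a finite set of probability exceeding `P Ω`. Hence all but countably many
points satisfy `n • P {ω} ≤ P Ω = 1` for every `n`, and an uncountable `Ω` has such a point.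
Regularity (NAP2) makes its probability positive: `P {ω} = 0` would force `P {ω}ᶜ = 1`.
-/

open Set

namespace FinitelyAdditive

variable {Ω M : Type*} {μ : Set Ω → M}

section Cancel

variable [AddCancelCommMonoid M]

theorem apply_empty (hadd : ∀ A B : Set Ω, A ∩ B = ∅ → μ (A ∪ B) = μ A + μ B) :
    μ ∅ = 0 := by
  have h := hadd ∅ ∅ (inter_self ∅)
  rw [union_self] at h
  exact left_eq_add.mp h

theorem apply_finset_eq_sum_singleton
    (hadd : ∀ A B : Set Ω, A ∩ B = ∅ → μ (A ∪ B) = μ A + μ B)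
    (s : Finset Ω) : μ s = ∑ ω ∈ s, μ {ω} := by
  classical
  induction s using Finset.induction_on with
  | empty => simpa using apply_empty hadd
  | insert a s ha ih =>
    rw [Finset.coe_insert, insert_eq, hadd _ _ (by simpa using ha), ih, Finset.sum_insert ha]

end Cancel

theorem apply_add_apply_compl [Add M]
    (hadd : ∀ A B : Set Ω, A ∩ B = ∅ → μ (A ∪ B) = μ A + μ B)
    (A : Set Ω) : μ A + μ Aᶜ = μ univ := by
  rw [← hadd A Aᶜ (inter_compl_self A), union_compl_self]

theorem apply_pos_of_nonempty [AddZeroClass M] [PartialOrder M] (hnonneg : ∀ A, 0 ≤ μ A)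
    (hadd : ∀ A B : Set Ω, A ∩ B = ∅ → μ (A ∪ B) = μ A + μ B)
    (hregular : ∀ A, μ A = μ univ → A = univ) {A : Set Ω} (hA : A.Nonempty) : 0 < μ A := by
  refine (hnonneg A).lt_of_ne fun hzero => ?_
  have hcompl : μ Aᶜ = μ univ := by rw [← apply_add_apply_compl hadd A, ← hzero, zero_add]
  obtain ⟨ω, hω⟩ := hA
  exact (hregular _ hcompl ▸ mem_univ ω : ω ∈ Aᶜ) hω

section Ordered

variable [AddCancelCommMonoid M] [PartialOrder M] [IsOrderedCancelAddMonoid M]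

theorem apply_le_apply_univ (hnonneg : ∀ A, 0 ≤ μ A)
    (hadd : ∀ A B : Set Ω, A ∩ B = ∅ → μ (A ∪ B) = μ A + μ B) (A : Set Ω) :
    μ A ≤ μ univ := by
  rw [← apply_add_apply_compl hadd A]
  exact le_add_of_nonneg_right (hnonneg Aᶜ)

theorem finite_setOf_apply_univ_lt_nsmul_apply_singleton (hnonneg : ∀ A, 0 ≤ μ A)
    (hadd : ∀ A B : Set Ω, A ∩ B = ∅ → μ (A ∪ B) = μ A + μ B) (n : ℕ) :
    {ω | μ univ < n • μ {ω}}.Finite := by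
  by_contra hinf
  obtain ⟨t, hts, hcard⟩ := Set.Infinite.exists_subset_card_eq hinf (n + 1)
  have htne : t.Nonempty := Finset.card_pos.mp (hcard ▸ n.succ_pos)
  have hbig : (n + 1) • μ univ < n • μ t :=
    calc (n + 1) • μ univ = ∑ _ω ∈ t, μ univ := by rw [Finset.sum_const, hcard]
      _ < ∑ ω ∈ t, n • μ {ω} := Finset.sum_lt_sum_of_nonempty htne fun ω hω => hts hω
      _ = n • μ t := by rw [← Finset.smul_sum, apply_finset_eq_sum_singleton hadd]
  have hsmall : n • μ t ≤ (n + 1) • μ univ :=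
    (nsmul_le_nsmul_right (apply_le_apply_univ hnonneg hadd _) n).trans
      (nsmul_le_nsmul_left (hnonneg univ) n.le_succ)
  exact (hbig.trans_le hsmall).false

end Ordered

theorem exists_forall_nsmul_apply_singleton_le [Uncountable Ω] [AddCancelCommMonoid M]
    [LinearOrder M] [IsOrderedCancelAddMonoid M] (hnonneg : ∀ A, 0 ≤ μ A)
    (hadd : ∀ A B : Set Ω, A ∩ B = ∅ → μ (A ∪ B) = μ A + μ B) :
    ∃ ω, ∀ n : ℕ, n • μ {ω} ≤ μ univ := by
  have hcount : (⋃ n : ℕ, {ω | μ univ < n • μ {ω}}).Countable :=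
    countable_iUnion fun n =>
      (finite_setOf_apply_univ_lt_nsmul_apply_singleton hnonneg hadd n).countable
  by_contra! hall
  exact not_countable_univ (hcount.mono fun ω _ => mem_iUnion.mpr (hall ω))

end FinitelyAdditive

open FinitelyAdditive

theorem nap_uncountable_nonArchimedean_general
    {Ω R : Type*} [Uncountable Ω] [Field R] [LinearOrder R] [IsStrictOrderedRing R]
    (P : Set Ω → R)
    (nap1 : ∀ A : Set Ω, 0 ≤ P A)
    (nap2 : ∀ A : Set Ω, P A = 1 ↔ A = Set.univ)
    (nap3 : ∀ A B : Set Ω, A ∩ B = ∅ → P (A ∪ B) = P A + P B) :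
    ∃ ω : Ω, 0 < P {ω} ∧ ∀ n : ℕ, (n : R) * P {ω} ≤ 1 := by
  have hunivP : P univ = 1 := (nap2 univ).mpr rfl
  obtain ⟨ω, hω⟩ := exists_forall_nsmul_apply_singleton_le nap1 nap3
  refine ⟨ω, apply_pos_of_nonempty nap1 nap3 (fun A hA => (nap2 A).mp (hA.trans hunivP))
    (singleton_nonempty ω), fun n => ?_⟩
  simpa only [nsmul_eq_mul, hunivP] using hω n

/-- For a NAP probability on an uncountable sample space, some singleton
has positive probability ε with n·ε ≤ 1 for all n, so the field is non-Archimedean. -/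
theorem nap_uncountable_nonArchimedean
    {Ω R : Type*} [Uncountable Ω] [Field R] [LinearOrder R] [IsStrictOrderedRing R] (ι : ℝ →+* R)
    (P : Set Ω → R)
    (nap1 : ∀ A : Set Ω, 0 ≤ P A)
    (nap2 : ∀ A : Set Ω, P A = 1 ↔ A = Set.univ)
    (nap3 : ∀ A B : Set Ω, A ∩ B = ∅ → P (A ∪ B) = P A + P B) :
    ∃ ω : Ω, 0 < P {ω} ∧ ∀ n : ℕ, (n : R) * P {ω} ≤ 1 :=
  nap_uncountable_nonArchimedean_general P nap1 nap2 nap3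
end

section
/- Let Ω be a set, 𝔄 a σ-algebra of subsets of Ω, and P : 𝔄 → ℝ satisfy (K1) P(A) ≥ 0 for all A ∈ 𝔄, (K2) P(Ω) = 1, and (K3) P(A ∪ B) = P(A) + P(B) for disjoint A, B ∈ 𝔄. Then the Continuity Axiom (K4) holds if and only if the Conditional Probability Principle (CPP) holds, where: (K4) for every increasing sequence (Aₙ) in 𝔄 with union A, P(A) = supₙ P(Aₙ); and (CPP) for every increasing sequence (Ωₙ) in 𝔄 with ⋃ₙ Ωₙ = Ω, there is N such that P(Ωₙ) > 0 for all n ≥ N, and for every A ∈ 𝔄 the sequence P(A ∩ Ωₙ)/P(Ωₙ) converges to P(A) as n → ∞. -/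
/-!
Continuity from below amounts to `P Ωₙ → 1` along every exhaustion `Ωₙ ↑ Ω`: for `Aₙ ↑ A`
apply it to `Aₙ ∪ Aᶜ`. Given continuity, `P (A ∩ Ωₙ) → P A` and `P Ωₙ → 1`, so the
conditional probabilities converge. Conversely, once `P Ω_N > 0`, the CPP for the event `Ω_N`
reads `P Ω_N / P Ωₙ → P Ω_N` (as `Ω_N ∩ Ωₙ = Ω_N` for `n ≥ N`), which forces `P Ωₙ → 1`.
-/

open Set Filter Topology MeasureTheory

theorem Monotone.ciSup_eq_iff_tendsto {ι α : Type*} [SemilatticeSup ι] [Nonempty ι]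
    [ConditionallyCompleteLinearOrder α] [TopologicalSpace α] [OrderTopology α] {f : ι → α}
    (hf : Monotone f) (hbdd : BddAbove (range f)) {a : α} :
    ⨆ i, f i = a ↔ Tendsto f atTop (𝓝 a) :=
  ⟨fun h => h ▸ tendsto_atTop_ciSup hf hbdd, fun h => (isLUB_of_tendsto_atTop hf h).ciSup_eq⟩

theorem tendsto_one_of_tendsto_const_div {ι : Type*} {l : Filter ι} {q : ι → ℝ} {c : ℝ}
    (hc : c ≠ 0) (h : Tendsto (fun i => c / q i) l (𝓝 c)) : Tendsto q l (𝓝 1) := by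
  -- `c / (c / q) = q` also at `q = 0`, where both sides are `0`.
  have : Tendsto (fun i => c / (c / q i)) l (𝓝 (c / c)) := tendsto_const_nhds.div h hc
  simpa only [div_div_cancel₀ hc, div_self hc] using this

theorem MeasureTheory.IsSetAlgebra.of_iUnion_mem {Ω : Type*} {𝔄 : Set (Set Ω)} (huniv : univ ∈ 𝔄)
    (hcompl : ∀ A ∈ 𝔄, Aᶜ ∈ 𝔄) (hiUnion : ∀ f : ℕ → Set Ω, (∀ n, f n ∈ 𝔄) → (⋃ n, f n) ∈ 𝔄) :
    IsSetAlgebra 𝔄 where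
  empty_mem := compl_univ (α := Ω) ▸ hcompl _ huniv
  compl_mem := hcompl
  union_mem {A B} hA hB := by
    have := hiUnion (fun n => if n = 0 then A else B) fun n => by split_ifs <;> assumption
    simpa only [← union_iUnion_nat_succ, if_pos, Nat.succ_ne_zero, if_false, iUnion_const]
      using this

section FinitelyAdditive

variable {Ω : Type*}

structure IsFinitelyAdditiveProbability (𝔄 : Set (Set Ω)) (P : Set Ω → ℝ) : Prop where
  isSetAlgebra : IsSetAlgebra 𝔄
  nonneg : ∀ A ∈ 𝔄, 0 ≤ P A
  univ_eq_one : P univ = 1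
  union_eq_add : ∀ A ∈ 𝔄, ∀ B ∈ 𝔄, A ∩ B = ∅ → P (A ∪ B) = P A + P B

def ContinuousFromBelow (𝔄 : Set (Set Ω)) (P : Set Ω → ℝ) : Prop :=
  ∀ A : ℕ → Set Ω, (∀ n, A n ∈ 𝔄) → Monotone A → (⋃ n, A n) ∈ 𝔄 →
    Tendsto (fun n => P (A n)) atTop (𝓝 (P (⋃ n, A n)))

def ConditionalProbabilityPrinciple (𝔄 : Set (Set Ω)) (P : Set Ω → ℝ) : Prop :=
  ∀ Ωn : ℕ → Set Ω, (∀ n, Ωn n ∈ 𝔄) → (∀ n, Ωn n ⊆ Ωn (n + 1)) → (⋃ n, Ωn n) = univ →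
    (∃ N : ℕ, ∀ n ≥ N, 0 < P (Ωn n)) ∧
    ∀ A ∈ 𝔄, Tendsto (fun n => P (A ∩ Ωn n) / P (Ωn n)) atTop (𝓝 (P A))

variable {𝔄 : Set (Set Ω)} {P : Set Ω → ℝ} {A B : Set Ω}

namespace IsFinitelyAdditiveProbability

theorem add_diff (hP : IsFinitelyAdditiveProbability 𝔄 P) (hA : A ∈ 𝔄) (hB : B ∈ 𝔄)
    (hAB : A ⊆ B) : P A + P (B \ A) = P B := by
  rw [← hP.union_eq_add A hA _ (hP.isSetAlgebra.sdiff_mem hB hA) (inter_sdiff_self A B),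
    union_sdiff_cancel hAB]

theorem mono (hP : IsFinitelyAdditiveProbability 𝔄 P) (hA : A ∈ 𝔄) (hB : B ∈ 𝔄)
    (hAB : A ⊆ B) : P A ≤ P B := by
  linarith [hP.add_diff hA hB hAB, hP.nonneg _ (hP.isSetAlgebra.sdiff_mem hB hA)]

theorem le_one (hP : IsFinitelyAdditiveProbability 𝔄 P) (hA : A ∈ 𝔄) : P A ≤ 1 :=
  hP.univ_eq_one ▸ hP.mono hA hP.isSetAlgebra.univ_mem (subset_univ A)

theorem add_compl (hP : IsFinitelyAdditiveProbability 𝔄 P) (hA : A ∈ 𝔄) : P A + P Aᶜ = 1 := by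
  rw [compl_eq_univ_sdiff, hP.add_diff hA hP.isSetAlgebra.univ_mem (subset_univ A),
    hP.univ_eq_one]

theorem ciSup_eq_iff_tendsto (hP : IsFinitelyAdditiveProbability 𝔄 P) {A : ℕ → Set Ω}
    (hA : ∀ n, A n ∈ 𝔄) (hmono : Monotone A) {a : ℝ} :
    ⨆ n, P (A n) = a ↔ Tendsto (fun n => P (A n)) atTop (𝓝 a) :=
  Monotone.ciSup_eq_iff_tendsto (fun _ _ hmn => hP.mono (hA _) (hA _) (hmono hmn))
    ⟨1, forall_mem_range.2 fun n => hP.le_one (hA n)⟩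

theorem continuousFromBelow_iff_iSup (hP : IsFinitelyAdditiveProbability 𝔄 P)
    (hiUnion : ∀ A : ℕ → Set Ω, (∀ n, A n ∈ 𝔄) → (⋃ n, A n) ∈ 𝔄) :
    ContinuousFromBelow 𝔄 P ↔ ∀ A : ℕ → Set Ω, (∀ n, A n ∈ 𝔄) → (∀ n, A n ⊆ A (n + 1)) →
      P (⋃ n, A n) = ⨆ n, P (A n) := by
  refine ⟨fun hK A hA hsucc => ?_, fun hK A hA hmono _ => ?_⟩
  · have hmono := monotone_nat_of_le_succ hsucc
    exact ((hP.ciSup_eq_iff_tendsto hA hmono).2 (hK A hA hmono (hiUnion A hA))).symm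
  · exact (hP.ciSup_eq_iff_tendsto hA hmono).1 (hK A hA fun n => hmono n.le_succ).symm

theorem continuousFromBelow_of_tendsto_one (hP : IsFinitelyAdditiveProbability 𝔄 P)
    (h : ∀ Ωn : ℕ → Set Ω, (∀ n, Ωn n ∈ 𝔄) → Monotone Ωn → (⋃ n, Ωn n) = univ →
      Tendsto (fun n => P (Ωn n)) atTop (𝓝 1)) :
    ContinuousFromBelow 𝔄 P := by
  intro A hA hmono hU
  set U := ⋃ n, A n
  have hUc := hP.isSetAlgebra.compl_mem hU
  have hlim := h (fun n => A n ∪ Uᶜ) (fun n => hP.isSetAlgebra.union_mem (hA n) hUc)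
    (fun _ _ hmn => union_subset_union_left _ (hmono hmn))
    (by rw [← iUnion_union, union_compl_self])
  have hadd (n : ℕ) : P (A n ∪ Uᶜ) = P (A n) + P Uᶜ :=
    hP.union_eq_add _ (hA n) _ hUc
      (disjoint_iff_inter_eq_empty.1 (disjoint_compl_right_iff_subset.2 (subset_iUnion A n)))
  rw [eq_sub_of_add_eq (hP.add_compl hU)]
  simpa only [hadd, add_sub_cancel_right] using hlim.sub_const (P Uᶜ)

end IsFinitelyAdditiveProbability

theorem ContinuousFromBelow.tendsto_inter (hK : ContinuousFromBelow 𝔄 P) (h𝔄 : IsSetAlgebra 𝔄)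
    {Ωn : ℕ → Set Ω} (hΩ : ∀ n, Ωn n ∈ 𝔄) (hmono : Monotone Ωn) (hU : (⋃ n, Ωn n) = univ)
    (hA : A ∈ 𝔄) : Tendsto (fun n => P (A ∩ Ωn n)) atTop (𝓝 (P A)) := by
  have hUA : (⋃ n, A ∩ Ωn n) = A := by rw [← inter_iUnion, hU, inter_univ]
  have := hK _ (fun n => h𝔄.inter_mem hA (hΩ n))
    (fun _ _ hmn => inter_subset_inter_right _ (hmono hmn)) (by rwa [hUA])
  rwa [hUA] at this

theorem tendsto_one_of_tendsto_inter_div {Ωn : ℕ → Set Ω} (hmono : Monotone Ωn) {N : ℕ}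
    (hN : P (Ωn N) ≠ 0)
    (h : Tendsto (fun n => P (Ωn N ∩ Ωn n) / P (Ωn n)) atTop (𝓝 (P (Ωn N)))) :
    Tendsto (fun n => P (Ωn n)) atTop (𝓝 1) :=
  tendsto_one_of_tendsto_const_div hN <|
    h.congr' (eventually_atTop.2 ⟨N, fun n hn => by rw [inter_eq_left.2 (hmono hn)]⟩)

theorem IsFinitelyAdditiveProbability.continuousFromBelow_iff_conditionalProbabilityPrinciple
    (hP : IsFinitelyAdditiveProbability 𝔄 P) :
    ContinuousFromBelow 𝔄 P ↔ ConditionalProbabilityPrinciple 𝔄 P := by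
  refine ⟨fun hK Ωn hΩ hsucc hU => ?_, fun hCPP => ?_⟩
  · have hlim := fun A (hA : A ∈ 𝔄) =>
      hK.tendsto_inter hP.isSetAlgebra hΩ (monotone_nat_of_le_succ hsucc) hU hA
    have h1 : Tendsto (fun n => P (Ωn n)) atTop (𝓝 1) := by
      simpa only [univ_inter, hP.univ_eq_one] using hlim univ hP.isSetAlgebra.univ_mem
    refine ⟨eventually_atTop.1 (h1.eventually (lt_mem_nhds one_pos)), fun A hA => ?_⟩
    have := (hlim A hA).div h1 one_ne_zero
    rwa [div_one] at this
  · refine hP.continuousFromBelow_of_tendsto_one fun Ωn hΩ hmono hU => ?_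
    obtain ⟨⟨N, hN⟩, hconv⟩ := hCPP Ωn hΩ (fun n => hmono n.le_succ) hU
    exact tendsto_one_of_tendsto_inter_div hmono (hN N le_rfl).ne' (hconv _ (hΩ N))

end FinitelyAdditive

/-- For a finitely additive probability on a σ-algebra, the Continuity
Axiom (K4) holds iff the Conditional Probability Principle (CPP) holds. -/
theorem continuity_iff_CPP
    {Ω : Type*} (𝔄 : Set (Set Ω)) (P : Set Ω → ℝ)
    (huniv : Set.univ ∈ 𝔄)
    (hcompl : ∀ A ∈ 𝔄, Aᶜ ∈ 𝔄)
    (hiUnion : ∀ f : ℕ → Set Ω, (∀ n, f n ∈ 𝔄) → (⋃ n, f n) ∈ 𝔄)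
    (K1 : ∀ A ∈ 𝔄, 0 ≤ P A)
    (K2 : P Set.univ = 1)
    (K3 : ∀ A ∈ 𝔄, ∀ B ∈ 𝔄, A ∩ B = ∅ → P (A ∪ B) = P A + P B) :
    (∀ A : ℕ → Set Ω, (∀ n, A n ∈ 𝔄) → (∀ n, A n ⊆ A (n + 1)) →
        P (⋃ n, A n) = ⨆ n, P (A n))
    ↔
    (∀ Ωn : ℕ → Set Ω, (∀ n, Ωn n ∈ 𝔄) → (∀ n, Ωn n ⊆ Ωn (n + 1)) →
        (⋃ n, Ωn n) = Set.univ →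
        (∃ N : ℕ, ∀ n ≥ N, 0 < P (Ωn n)) ∧
        ∀ A ∈ 𝔄, Filter.Tendsto (fun n => P (A ∩ Ωn n) / P (Ωn n))
          Filter.atTop (nhds (P A))) := by
  have hP : IsFinitelyAdditiveProbability 𝔄 P :=
    ⟨.of_iUnion_mem huniv hcompl hiUnion, K1, K2, K3⟩
  exact (hP.continuousFromBelow_iff_iSup hiUnion).symm.trans
    hP.continuousFromBelow_iff_conditionalProbabilityPrinciple
end

section
/- Let (Ω, R, P, J) be a NAP-space and fix ω₀ ∈ Ω. Then there exists a function w : Ω → ℝ such that: (i) for every ω ∈ Ω, the image of w(ω) in R multiplied by P({ω₀}) equals P({ω}) (i.e. w(ω) is the real number representing P({ω})/P({ω₀})); and (ii) for every A ⊆ Ω and every nonempty finite λ ⊆ Ω, P(A ∩ λ) · ι(∑_{ω ∈ λ} w(ω)) = P(λ) · ι(∑_{ω ∈ A ∩ λ} w(ω)), where ι : ℝ → R is the ring homomorphism; equivalently P(A|λ) = (∑_{ω ∈ A∩λ} w(ω))/(∑_{ω ∈ λ} w(ω)). -/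
/-!
Conditional probabilities with respect to finite sets are real, so `P {ω} / P {ω₀}` is the real
number `w ω := P({ω} | {ω, ω₀}) / P({ω₀} | {ω, ω₀})`; the denominator is nonzero because only the
empty set can have probability zero (its complement would otherwise have probability one).
Finite additivity then gives `ι (∑ ω ∈ s, w ω) · P {ω₀} = P s` for every finite `s`, and applying
this to `λ` and to `A ∩ λ` and cancelling `P {ω₀}` yields the weighted-counting formula.
-/

/-- The type of nonempty finite subsets of `Ω`. -/
abbrev FinP (Ω : Type*) := {l : Finset Ω // l.Nonempty}

def IsFinitelyAdditive {Ω M : Type*} [Add M] (P : Set Ω → M) : Prop :=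
  ∀ A B : Set Ω, A ∩ B = ∅ → P (A ∪ B) = P A + P B

namespace IsFinitelyAdditive

section Basic

variable {Ω M : Type*} {P : Set Ω → M}

theorem apply_empty [AddMonoid M] [IsLeftCancelAdd M] (hP : IsFinitelyAdditive P) : P ∅ = 0 := by
  have h := hP ∅ ∅ (Set.inter_self ∅)
  rwa [Set.union_self, left_eq_add] at h

theorem apply_add_apply_compl [Add M] (hP : IsFinitelyAdditive P) (A : Set Ω) :
    P A + P Aᶜ = P Set.univ := by
  rw [← hP A Aᶜ (Set.inter_compl_self A), Set.union_compl_self]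

theorem apply_finset [AddCancelCommMonoid M] (hP : IsFinitelyAdditive P) (s : Finset Ω) :
    P s = ∑ ω ∈ s, P {ω} := by
  classical
  induction s using Finset.induction with
  | empty => simpa using hP.apply_empty
  | insert a s ha ih =>
    have hdisj : {a} ∩ (s : Set Ω) = ∅ := by simpa using ha
    rw [Finset.coe_insert, Set.insert_eq, hP _ _ hdisj, ih, Finset.sum_insert ha]

theorem apply_ne_zero [AddMonoid M] [One M] (hP : IsFinitelyAdditive P)
    (hP1 : ∀ A : Set Ω, P A = 1 ↔ A = Set.univ) {A : Set Ω} (hA : A.Nonempty) : P A ≠ 0 := by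
  intro hA0
  have hcompl : Aᶜ = Set.univ := by
    rw [← hP1, ← zero_add (P Aᶜ), ← hA0, hP.apply_add_apply_compl, hP1]
  obtain ⟨x, hx⟩ := hA
  exact Set.eq_univ_iff_forall.mp hcompl x hx

end Basic

section Weight

variable {Ω K L : Type*} [CommSemiring K] [CommRing L] [Algebra K L] {P : Set Ω → L} {c : L}
  {w : Ω → K}

theorem algebraMap_sum_mul (hP : IsFinitelyAdditive P)
    (hw : ∀ ω, algebraMap K L (w ω) * c = P {ω}) (s : Finset Ω) :
    algebraMap K L (∑ ω ∈ s, w ω) * c = P s := by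
  rw [map_sum, Finset.sum_mul, hP.apply_finset]
  exact Finset.sum_congr rfl fun ω _ => hw ω

theorem algebraMap_sum_indicator_mul (hP : IsFinitelyAdditive P)
    (hw : ∀ ω, algebraMap K L (w ω) * c = P {ω}) (A : Set Ω) (s : Finset Ω) :
    algebraMap K L (∑ ω ∈ s, A.indicator w ω) * c = P (A ∩ s) := by
  classical
  rw [Finset.sum_indicator_eq_sum_filter s (fun _ => w) (fun _ => A) (fun ω => ω),
    hP.algebraMap_sum_mul hw, Finset.coe_filter]
  exact congrArg P (Set.ext fun _ => and_comm)

end Weight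

end IsFinitelyAdditive

theorem algebraMap_div_mul_of_mul_eq {K L : Type*} [Field K] [Field L] [Algebra K L] {a b : K}
    {x y z : L} (ha : algebraMap K L a * z = x) (hb : algebraMap K L b * z = y) (hy : y ≠ 0) :
    algebraMap K L (a / b) * y = x := by
  have hb0 : b ≠ 0 := by
    rintro rfl
    simp [← hb] at hy
  rw [← ha, ← hb, ← mul_assoc, ← map_mul, div_mul_cancel₀ _ hb0]

theorem nap_weight_function_exists_general
    {Ω R : Type*} [Field R] [Algebra ℝ R]
    (P : Set Ω → R) (φ : Set Ω → FinP Ω → ℝ)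
    (nap2 : ∀ A : Set Ω, P A = 1 ↔ A = Set.univ)
    (nap3 : ∀ A B : Set Ω, A ∩ B = ∅ → P (A ∪ B) = P A + P B)
    (nap4a : ∀ (A : Set Ω) (l : FinP Ω),
      algebraMap ℝ R (φ A l) * P (l.1 : Set Ω) = P (A ∩ (l.1 : Set Ω)))
    (ω₀ : Ω) :
    ∃ w : Ω → ℝ,
      (∀ ω : Ω, algebraMap ℝ R (w ω) * P {ω₀} = P {ω}) ∧
      (∀ (A : Set Ω) (l : FinP Ω),
        P (A ∩ (l.1 : Set Ω)) * algebraMap ℝ R (∑ ω ∈ l.1, w ω)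
          = P (l.1 : Set Ω) * algebraMap ℝ R (∑ ω ∈ l.1, Set.indicator A w ω)) := by
  classical
  have hP : IsFinitelyAdditive P := nap3
  have hP₀ : P {ω₀} ≠ 0 := hP.apply_ne_zero nap2 (Set.singleton_nonempty ω₀)
  let pair (ω : Ω) : FinP Ω := ⟨{ω, ω₀}, Finset.insert_nonempty _ _⟩
  have hcond (ω' ω : Ω) (h : ω' = ω ∨ ω' = ω₀) :
      algebraMap ℝ R (φ {ω'} (pair ω)) * P (pair ω).1 = P {ω'} := by
    rw [nap4a, Set.inter_eq_left.mpr (by simpa [pair] using h)]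
  have hw (ω : Ω) : algebraMap ℝ R (φ {ω} (pair ω) / φ {ω₀} (pair ω)) * P {ω₀} = P {ω} :=
    algebraMap_div_mul_of_mul_eq (hcond ω ω (.inl rfl)) (hcond ω₀ ω (.inr rfl)) hP₀
  refine ⟨_, hw, fun A l => mul_right_cancel₀ hP₀ ?_⟩
  have hl := hP.algebraMap_sum_mul hw l.1
  have hAl := hP.algebraMap_sum_indicator_mul hw A l.1
  linear_combination P (A ∩ l.1) * hl - P l.1 * hAl

/-- In a NAP-space, fixing `ω₀`, there is a real-valued weight function
`w` with `ι(w ω) · P {ω₀} = P {ω}` for all `ω`, and the conditional probabilities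
with respect to finite sets are given by the weighted-counting formula
`P(A|λ) = (∑_{ω ∈ A∩λ} w ω)/(∑_{ω ∈ λ} w ω)`. -/
theorem nap_weight_function_exists
    {Ω R : Type*} [Nonempty Ω] [Field R] [LinearOrder R] [IsStrictOrderedRing R] [Algebra ℝ R]
    (P : Set Ω → R) (φ : Set Ω → FinP Ω → ℝ)
    (J : (FinP Ω → ℝ) →ₐ[ℝ] R)
    (nap1 : ∀ A : Set Ω, 0 ≤ P A)
    (nap2 : ∀ A : Set Ω, P A = 1 ↔ A = Set.univ)
    (nap3 : ∀ A B : Set Ω, A ∩ B = ∅ → P (A ∪ B) = P A + P B)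
    (nap4a : ∀ (A : Set Ω) (l : FinP Ω),
      algebraMap ℝ R (φ A l) * P (l.1 : Set Ω) = P (A ∩ (l.1 : Set Ω)))
    (nap4b : ∀ A : Set Ω, P A = J (φ A))
    (ω₀ : Ω) :
    ∃ w : Ω → ℝ,
      (∀ ω : Ω, algebraMap ℝ R (w ω) * P {ω₀} = P {ω}) ∧
      (∀ (A : Set Ω) (l : FinP Ω),
        P (A ∩ (l.1 : Set Ω)) * algebraMap ℝ R (∑ ω ∈ l.1, w ω)
          = P (l.1 : Set Ω) * algebraMap ℝ R (∑ ω ∈ l.1, Set.indicator A w ω)) :=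
  nap_weight_function_exists_general P φ nap2 nap3 nap4a ω₀
end

section
/- Let (Ω, R, P, J) be a NAP-space, fix ω₀ ∈ Ω, and let w : Ω → ℝ be the weight function, i.e. ι(w(ω))·P({ω₀}) = P({ω}) for all ω (where ι : ℝ → R is the ring homomorphism). Then: (i) for every ω ∈ Ω, J(χ_·(ω)) = 1, where χ_λ(ω) is the function of λ equal to 1 if ω ∈ λ and 0 otherwise; and (ii) J(λ ↦ ∑_{ω ∈ λ} w(ω)) · P({ω₀}) = 1, i.e. J of the function λ ↦ ∑_{ω∈λ} w(ω) equals 1/P({ω₀}) in R. -/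
/-!
Both parts come from two pointwise identities between functions of `λ`. If `P(A) = 0` then
`P(Aᶜ) = P(Ω) = 1`, so `Aᶜ = Ω` by (NAP2); hence `P(λ) ≠ 0` for nonempty `λ`, and the identity
`ι(φ_{ω}(λ)) P(λ) = P({ω} ∩ λ)` forces `φ_{ω}(λ) = 0` when `ω ∉ λ`, so `φ_{ω} · χ_·(ω) = φ_{ω}`;
applying `J` and cancelling `J(φ_{ω}) = P({ω}) ≠ 0` gives (i). When `ω₀ ∈ λ`, finite additivity
and the definition of `w` give `ι(∑_{ω∈λ} w ω) P({ω₀}) = P(λ)`, so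
`(∑_{ω∈λ} w ω) · φ_{ω₀}(λ) = χ_λ(ω₀)`; applying `J` and (i) gives (ii).
-/

namespace NAP

variable {Ω R : Type*} [Field R] {P : Set Ω → R}

theorem map_empty_eq_zero (hadd : ∀ A B : Set Ω, A ∩ B = ∅ → P (A ∪ B) = P A + P B) :
    P ∅ = 0 := by
  simpa using hadd ∅ ∅ (Set.empty_inter ∅)

theorem map_finset_eq_sum_singleton
    (hadd : ∀ A B : Set Ω, A ∩ B = ∅ → P (A ∪ B) = P A + P B) (s : Finset Ω) :
    P s = ∑ ω ∈ s, P {ω} := by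
  classical
  induction s using Finset.induction_on with
  | empty => simpa using map_empty_eq_zero hadd
  | insert a s ha ih =>
    have hdisj : {a} ∩ (s : Set Ω) = ∅ := Set.singleton_inter_eq_empty.mpr (by simpa using ha)
    rw [Finset.coe_insert, Set.insert_eq, hadd _ _ hdisj, ih, Finset.sum_insert ha]

theorem eq_empty_of_map_eq_zero (huniv : ∀ A : Set Ω, P A = 1 ↔ A = Set.univ)
    (hadd : ∀ A B : Set Ω, A ∩ B = ∅ → P (A ∪ B) = P A + P B) {A : Set Ω} (hA : P A = 0) :
    A = ∅ := by
  have hcompl : P Aᶜ = 1 := by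
    rw [← zero_add (P Aᶜ), ← hA, ← hadd _ _ (Set.inter_compl_self A), Set.union_compl_self,
      huniv]
  simpa using (huniv _).mp hcompl

theorem map_ne_zero_of_nonempty (huniv : ∀ A : Set Ω, P A = 1 ↔ A = Set.univ)
    (hadd : ∀ A B : Set Ω, A ∩ B = ∅ → P (A ∪ B) = P A + P B) {A : Set Ω} (hA : A.Nonempty) :
    P A ≠ 0 :=
  fun h => hA.ne_empty (eq_empty_of_map_eq_zero huniv hadd h)

variable [Algebra ℝ R] {L : Set Ω} {c : ℝ} {ω₀ : Ω}

theorem cond_singleton_eq_zero_of_notMem (hP0 : P ∅ = 0) (hL : P L ≠ 0)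
    (hc : algebraMap ℝ R c * P L = P ({ω₀} ∩ L)) (hω₀ : ω₀ ∉ L) : c = 0 := by
  rw [Set.singleton_inter_eq_empty.mpr hω₀, hP0] at hc
  simpa [hL] using hc

theorem cond_singleton_mul_indicator (hP0 : P ∅ = 0) (hL : P L ≠ 0)
    (hc : algebraMap ℝ R c * P L = P ({ω₀} ∩ L)) :
    c * L.indicator (fun _ => (1 : ℝ)) ω₀ = c := by
  by_cases hω₀ : ω₀ ∈ L
  · simp [hω₀]
  · simp [cond_singleton_eq_zero_of_notMem hP0 hL hc hω₀]

theorem sum_weight_mul_cond_singleton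
    (hadd : ∀ A B : Set Ω, A ∩ B = ∅ → P (A ∪ B) = P A + P B) {w : Ω → ℝ}
    (hw : ∀ ω : Ω, algebraMap ℝ R (w ω) * P {ω₀} = P {ω}) {s : Finset Ω} (hs : P s ≠ 0)
    (hc : algebraMap ℝ R c * P s = P ({ω₀} ∩ s)) :
    (∑ ω ∈ s, w ω) * c = (s : Set Ω).indicator (fun _ => (1 : ℝ)) ω₀ := by
  by_cases hω₀ : ω₀ ∈ (s : Set Ω)
  · have hsum : algebraMap ℝ R (∑ ω ∈ s, w ω) * P {ω₀} = P s := by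
      rw [map_sum, Finset.sum_mul, map_finset_eq_sum_singleton hadd]
      exact Finset.sum_congr rfl fun ω _ => hw ω
    rw [Set.inter_eq_left.mpr (Set.singleton_subset_iff.mpr hω₀)] at hc
    rw [Set.indicator_of_mem hω₀]
    apply (algebraMap ℝ R).injective
    apply mul_right_cancel₀ hs
    rw [map_mul, mul_assoc, hc, hsum, map_one, one_mul]
  · rw [cond_singleton_eq_zero_of_notMem (map_empty_eq_zero hadd) hs hc hω₀, mul_zero,
      Set.indicator_of_notMem hω₀]

end NAP

theorem nap_J_char_and_total_weight_general
    {Ω R : Type*} [Field R] [Algebra ℝ R]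
    (P : Set Ω → R) (φ : Set Ω → FinP Ω → ℝ)
    (J : (FinP Ω → ℝ) →ₐ[ℝ] R)
    (nap2 : ∀ A : Set Ω, P A = 1 ↔ A = Set.univ)
    (nap3 : ∀ A B : Set Ω, A ∩ B = ∅ → P (A ∪ B) = P A + P B)
    (nap4a : ∀ (A : Set Ω) (l : FinP Ω),
      algebraMap ℝ R (φ A l) * P (l.1 : Set Ω) = P (A ∩ (l.1 : Set Ω)))
    (nap4b : ∀ A : Set Ω, P A = J (φ A))
    (ω₀ : Ω) (w : Ω → ℝ)
    (hw : ∀ ω : Ω, algebraMap ℝ R (w ω) * P {ω₀} = P {ω}) :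
    (∀ ω : Ω,
      J (fun l : FinP Ω => Set.indicator (l.1 : Set Ω) (fun _ => (1 : ℝ)) ω) = 1) ∧
    J (fun l : FinP Ω => ∑ ω ∈ l.1, w ω) * P {ω₀} = 1 := by
  have hP0 := NAP.map_empty_eq_zero nap3
  have hl : ∀ l : FinP Ω, P (l.1 : Set Ω) ≠ 0 := fun l =>
    NAP.map_ne_zero_of_nonempty nap2 nap3 (Finset.coe_nonempty.mpr l.2)
  have hchar : ∀ ω : Ω,
      J (fun l : FinP Ω => Set.indicator (l.1 : Set Ω) (fun _ => (1 : ℝ)) ω) = 1 := by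
    intro ω
    have hφ : φ {ω} * (fun l : FinP Ω => Set.indicator (l.1 : Set Ω) (fun _ => (1 : ℝ)) ω)
        = φ {ω} := funext fun l => NAP.cond_singleton_mul_indicator hP0 (hl l) (nap4a {ω} l)
    have hJ := congrArg J hφ
    rw [map_mul, ← nap4b] at hJ
    exact mul_eq_left₀ (NAP.map_ne_zero_of_nonempty nap2 nap3 (Set.singleton_nonempty ω)) |>.mp hJ
  refine ⟨hchar, ?_⟩
  have hweight : (fun l : FinP Ω => ∑ ω ∈ l.1, w ω) * φ {ω₀}
      = fun l : FinP Ω => Set.indicator (l.1 : Set Ω) (fun _ => (1 : ℝ)) ω₀ :=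
    funext fun l => NAP.sum_weight_mul_cond_singleton nap3 hw (hl l) (nap4a {ω₀} l)
  rw [nap4b, ← map_mul, hweight, hchar]

/-- In a NAP-space with weight function `w` (relative to `ω₀`):
(i) `J(χ_·(ω)) = 1` for every `ω`, and (ii) `J(λ ↦ ∑_{ω ∈ λ} w ω) = 1/P({ω₀})`. -/
theorem nap_J_char_and_total_weight
    {Ω R : Type*} [Nonempty Ω] [Field R] [LinearOrder R] [IsStrictOrderedRing R] [Algebra ℝ R]
    (P : Set Ω → R) (φ : Set Ω → FinP Ω → ℝ)
    (J : (FinP Ω → ℝ) →ₐ[ℝ] R)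
    (nap1 : ∀ A : Set Ω, 0 ≤ P A)
    (nap2 : ∀ A : Set Ω, P A = 1 ↔ A = Set.univ)
    (nap3 : ∀ A B : Set Ω, A ∩ B = ∅ → P (A ∪ B) = P A + P B)
    (nap4a : ∀ (A : Set Ω) (l : FinP Ω),
      algebraMap ℝ R (φ A l) * P (l.1 : Set Ω) = P (A ∩ (l.1 : Set Ω)))
    (nap4b : ∀ A : Set Ω, P A = J (φ A))
    (ω₀ : Ω) (w : Ω → ℝ)
    (hw : ∀ ω : Ω, algebraMap ℝ R (w ω) * P {ω₀} = P {ω}) :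
    (∀ ω : Ω,
      J (fun l : FinP Ω => Set.indicator (l.1 : Set Ω) (fun _ => (1 : ℝ)) ω) = 1) ∧
    J (fun l : FinP Ω => ∑ ω ∈ l.1, w ω) * P {ω₀} = 1 :=
  nap_J_char_and_total_weight_general P φ J nap2 nap3 nap4a nap4b ω₀ w hw
end

section
/- Let (Ω, R, P, J) be a NAP-space with Ω infinite. Then the kernel of the ℝ-algebra homomorphism J : 𝔉 → R is a fine ideal of 𝔉: it is a maximal ideal, and for every ω ∈ Ω the function λ ↦ 1 − χ_λ(ω) belongs to ker(J), where χ_λ(ω) = 1 if ω ∈ λ and 0 otherwise. -/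
instance Pi.ringKrullDimLE_zero {ι K : Type*} [Field K] : Ring.KrullDimLE 0 (ι → K) := by
  refine .mk₀ fun I hI => Ideal.isMaximal_iff.mpr
    ⟨(Ideal.ne_top_iff_one I).mp hI.ne_top, fun M x hIM hxI hxM => ?_⟩
  have hannihilate : x * (1 - x * x⁻¹) = 0 := by
    ext i
    simp [mul_sub, ← mul_assoc]
  have hcomplement : 1 - x * x⁻¹ ∈ I :=
    (hI.mem_or_mem (hannihilate ▸ I.zero_mem)).resolve_left hxI
  simpa using M.add_mem (hIM hcomplement) (M.mul_mem_right x⁻¹ hxM)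

section AdditiveSetFunction

variable {Ω R : Type*} {P : Set Ω → R}

theorem apply_empty_eq_zero_of_additive [AddCancelMonoid R]
    (hadd : ∀ A B : Set Ω, A ∩ B = ∅ → P (A ∪ B) = P A + P B) : P ∅ = 0 := by
  have h := hadd ∅ ∅ (Set.empty_inter ∅)
  rw [Set.empty_union] at h
  exact left_eq_add.mp h

theorem apply_singleton_ne_zero [AddMonoidWithOne R]
    (hone : ∀ A : Set Ω, P A = 1 ↔ A = Set.univ)
    (hadd : ∀ A B : Set Ω, A ∩ B = ∅ → P (A ∪ B) = P A + P B) (ω : Ω) : P {ω} ≠ 0 := by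
  intro hω
  have h := hadd {ω}ᶜ {ω} (Set.compl_inter_self {ω})
  rw [Set.compl_union_self, hω, add_zero, (hone _).mpr rfl, eq_comm, hone] at h
  exact Set.notMem_compl_iff.mpr rfl (h ▸ Set.mem_univ ω)

theorem apply_mono_of_additive [AddCommMonoid R] [PartialOrder R] [IsOrderedAddMonoid R]
    (hnonneg : ∀ A : Set Ω, 0 ≤ P A)
    (hadd : ∀ A B : Set Ω, A ∩ B = ∅ → P (A ∪ B) = P A + P B) {A B : Set Ω} (hAB : A ⊆ B) :
    P A ≤ P B := by
  rw [← Set.union_sdiff_cancel hAB, hadd A (B \ A) (Set.inter_sdiff_self A B)]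
  exact le_add_of_nonneg_right (hnonneg _)

theorem apply_ne_zero_of_nonempty [AddCommMonoidWithOne R] [PartialOrder R]
    [IsOrderedAddMonoid R] (hnonneg : ∀ A : Set Ω, 0 ≤ P A)
    (hone : ∀ A : Set Ω, P A = 1 ↔ A = Set.univ)
    (hadd : ∀ A B : Set Ω, A ∩ B = ∅ → P (A ∪ B) = P A + P B) {A : Set Ω} (hA : A.Nonempty) :
    P A ≠ 0 := by
  obtain ⟨ω, hω⟩ := hA
  intro hzero
  refine apply_singleton_ne_zero hone hadd ω (le_antisymm ?_ (hnonneg _))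
  exact hzero ▸ apply_mono_of_additive hnonneg hadd (Set.singleton_subset_iff.mpr hω)

end AdditiveSetFunction

section ConditionalProbability

variable {Ω R : Type*} [Field R] [PartialOrder R] [IsOrderedAddMonoid R] [Algebra ℝ R]
  {P : Set Ω → R} {φ : Set Ω → FinP Ω → ℝ}

theorem cond_singleton_eq_zero_of_notMem
    (hnonneg : ∀ A : Set Ω, 0 ≤ P A)
    (hone : ∀ A : Set Ω, P A = 1 ↔ A = Set.univ)
    (hadd : ∀ A B : Set Ω, A ∩ B = ∅ → P (A ∪ B) = P A + P B)
    (hcond : ∀ (A : Set Ω) (l : FinP Ω),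
      algebraMap ℝ R (φ A l) * P (l.1 : Set Ω) = P (A ∩ (l.1 : Set Ω)))
    {ω : Ω} {l : FinP Ω} (hω : ω ∉ l.1) : φ {ω} l = 0 := by
  have h := hcond {ω} l
  rw [Set.singleton_inter_eq_empty.mpr (by exact_mod_cast hω),
    apply_empty_eq_zero_of_additive hadd] at h
  have hl : P (l.1 : Set Ω) ≠ 0 :=
    apply_ne_zero_of_nonempty hnonneg hone hadd (Finset.coe_nonempty.mpr l.2)
  exact (map_eq_zero_iff _ (algebraMap ℝ R).injective).mp ((mul_eq_zero.mp h).resolve_right hl)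

theorem cond_singleton_mul_one_sub_indicator_eq_zero
    (hnonneg : ∀ A : Set Ω, 0 ≤ P A)
    (hone : ∀ A : Set Ω, P A = 1 ↔ A = Set.univ)
    (hadd : ∀ A B : Set Ω, A ∩ B = ∅ → P (A ∪ B) = P A + P B)
    (hcond : ∀ (A : Set Ω) (l : FinP Ω),
      algebraMap ℝ R (φ A l) * P (l.1 : Set Ω) = P (A ∩ (l.1 : Set Ω)))
    (ω : Ω) :
    φ {ω} * (fun l : FinP Ω => 1 - Set.indicator (l.1 : Set Ω) (fun _ => (1 : ℝ)) ω) = 0 := by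
  ext l
  by_cases hω : ω ∈ (l.1 : Set Ω)
  · simp [Set.indicator_of_mem hω]
  · simp [cond_singleton_eq_zero_of_notMem hnonneg hone hadd hcond hω]

end ConditionalProbability

theorem nap_ker_J_fine_general
    {Ω R : Type*} [Field R] [LinearOrder R] [IsStrictOrderedRing R] [Algebra ℝ R]
    (P : Set Ω → R) (φ : Set Ω → FinP Ω → ℝ)
    (J : (FinP Ω → ℝ) →ₐ[ℝ] R)
    (nap1 : ∀ A : Set Ω, 0 ≤ P A)
    (nap2 : ∀ A : Set Ω, P A = 1 ↔ A = Set.univ)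
    (nap3 : ∀ A B : Set Ω, A ∩ B = ∅ → P (A ∪ B) = P A + P B)
    (nap4a : ∀ (A : Set Ω) (l : FinP Ω),
      algebraMap ℝ R (φ A l) * P (l.1 : Set Ω) = P (A ∩ (l.1 : Set Ω)))
    (nap4b : ∀ A : Set Ω, P A = J (φ A)) :
    (RingHom.ker (J : (FinP Ω → ℝ) →+* R)).IsMaximal ∧
    ∀ ω : Ω,
      (fun l : FinP Ω => 1 - Set.indicator (l.1 : Set Ω) (fun _ => (1 : ℝ)) ω)
        ∈ RingHom.ker (J : (FinP Ω → ℝ) →+* R) := by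
  refine ⟨(RingHom.ker_isPrime _).isMaximal', fun ω => ?_⟩
  have hJφ : J (φ {ω}) ≠ 0 := nap4b {ω} ▸ apply_singleton_ne_zero nap2 nap3 ω
  have hprod := congrArg J (cond_singleton_mul_one_sub_indicator_eq_zero nap1 nap2 nap3 nap4a ω)
  rw [map_mul, map_zero] at hprod
  exact (mul_eq_zero.mp hprod).resolve_left hJφ

/-- In a NAP-space with `Ω` infinite, the kernel of `J` is a fine ideal:
it is maximal and contains all the functions `λ ↦ 1 − χ_λ(ω)`. -/
theorem nap_ker_J_fine
    {Ω R : Type*} [Infinite Ω] [Field R] [LinearOrder R] [IsStrictOrderedRing R] [Algebra ℝ R]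
    (P : Set Ω → R) (φ : Set Ω → FinP Ω → ℝ)
    (J : (FinP Ω → ℝ) →ₐ[ℝ] R)
    (nap1 : ∀ A : Set Ω, 0 ≤ P A)
    (nap2 : ∀ A : Set Ω, P A = 1 ↔ A = Set.univ)
    (nap3 : ∀ A B : Set Ω, A ∩ B = ∅ → P (A ∪ B) = P A + P B)
    (nap4a : ∀ (A : Set Ω) (l : FinP Ω),
      algebraMap ℝ R (φ A l) * P (l.1 : Set Ω) = P (A ∩ (l.1 : Set Ω)))
    (nap4b : ∀ A : Set Ω, P A = J (φ A)) :
    (RingHom.ker (J : (FinP Ω → ℝ) →+* R)).IsMaximal ∧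
    ∀ ω : Ω,
      (fun l : FinP Ω => 1 - Set.indicator (l.1 : Set Ω) (fun _ => (1 : ℝ)) ω)
        ∈ RingHom.ker (J : (FinP Ω → ℝ) →+* R) :=
  nap_ker_J_fine_general P φ J nap1 nap2 nap3 nap4a nap4b
end

section
/- For every infinite set Ω and every weight function w : Ω → ℝ with w(ω) > 0 for all ω ∈ Ω, there exists a NAP-space (Ω, R, P, J) (satisfying (NAP0)–(NAP4)) whose conditional probabilities are given by the weights: for every A ⊆ Ω and every nonempty finite λ ⊆ Ω, φ_A(λ) = (∑_{ω ∈ A ∩ λ} w(ω))/(∑_{ω ∈ λ} w(ω)). In particular the NAP axioms are consistent. -/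
/-!
The probability is taken in an ultrapower of `ℝ`, indexed by the nonempty finite sets `λ` along
an ultrafilter that contains every cone `{λ | λ₀ ⊆ λ}`: `P A` is the class of `λ ↦ φ_A(λ)`.
Every identity between the `φ`'s that holds once `λ` is large enough holds in the ultrapower; in
particular `φ_A(λ₀) φ_{λ₀}(λ) = φ_{A ∩ λ₀}(λ)` for `λ ⊇ λ₀` gives (NAP4), and a point outside `A`
eventually lies in `λ`, which forces `φ_A(λ) < 1` and hence `P A ≠ 1`.
-/

open Filter Finset

section WeightedCondProb

variable {Ω : Type*} (w : Ω → ℝ)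

noncomputable def weightedCondProb (A : Set Ω) (s : Finset Ω) : ℝ :=
  (∑ ω ∈ s, A.indicator w ω) / ∑ ω ∈ s, w ω

variable {w}

theorem weightedCondProb_nonneg (hw : ∀ ω, 0 ≤ w ω) (A : Set Ω) (s : Finset Ω) :
    0 ≤ weightedCondProb w A s :=
  div_nonneg (sum_nonneg fun ω _ => Set.indicator_nonneg (fun x _ => hw x) ω)
    (sum_nonneg fun ω _ => hw ω)

theorem weightedCondProb_union {A B : Set Ω} (h : Disjoint A B) (s : Finset Ω) :
    weightedCondProb w (A ∪ B) s = weightedCondProb w A s + weightedCondProb w B s := by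
  simp only [weightedCondProb, Set.indicator_union_of_disjoint h, sum_add_distrib, add_div]

theorem weightedCondProb_univ {s : Finset Ω} (hs : ∑ ω ∈ s, w ω ≠ 0) :
    weightedCondProb w Set.univ s = 1 := by
  simp only [weightedCondProb, Set.indicator_univ, div_self hs]

theorem weightedCondProb_lt_one (hw : ∀ ω, 0 < w ω) {A : Set Ω} {s : Finset Ω} {ω₀ : Ω}
    (hs : ω₀ ∈ s) (hA : ω₀ ∉ A) : weightedCondProb w A s < 1 := by
  classical
  have hnum : ∑ ω ∈ s, A.indicator w ω ≤ ∑ ω ∈ s, w ω - w ω₀ := by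
    rw [← sum_erase _ (Set.indicator_of_notMem hA w), ← sum_erase_eq_sub hs]
    exact sum_le_sum fun ω _ => Set.indicator_le_self' (fun x _ => (hw x).le) ω
  rw [weightedCondProb, div_lt_one (sum_pos (fun ω _ => hw ω) ⟨ω₀, hs⟩)]
  linarith [hw ω₀]

theorem weightedCondProb_mul_weightedCondProb_of_subset {t s : Finset Ω} (hts : t ⊆ s)
    (ht : ∑ ω ∈ t, w ω ≠ 0) (A : Set Ω) :
    weightedCondProb w A t * weightedCondProb w t s = weightedCondProb w (A ∩ t) s := by
  have hA : ∑ ω ∈ s, (A ∩ t).indicator w ω = ∑ ω ∈ t, A.indicator w ω := by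
    rw [Set.inter_comm, ← Set.indicator_indicator, sum_indicator_subset _ hts]
  rw [weightedCondProb, weightedCondProb, weightedCondProb, sum_indicator_subset _ hts, hA,
    div_mul_div_comm, mul_comm (∑ ω ∈ t, w ω), mul_div_mul_right _ _ ht]

end WeightedCondProb

namespace FinP

variable {Ω : Type*}

instance [Nonempty Ω] : Nonempty (FinP Ω) :=
  ⟨⟨{Classical.arbitrary Ω}, singleton_nonempty _⟩⟩

instance [DecidableEq Ω] : IsDirectedOrder (FinP Ω) :=
  ⟨fun s t => ⟨⟨s.1 ∪ t.1, s.2.mono subset_union_left⟩, subset_union_left, subset_union_right⟩⟩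

end FinP

section NapProb

variable {Ω : Type*} (U : Ultrafilter (FinP Ω)) (w : Ω → ℝ)

noncomputable def napProb (A : Set Ω) : Germ (U : Filter (FinP Ω)) ℝ :=
  ↑fun l : FinP Ω => weightedCondProb w A l.1

variable {U w}

theorem napProb_nonneg (hw : ∀ ω, 0 ≤ w ω) (A : Set Ω) : 0 ≤ napProb U w A :=
  Germ.coe_le.2 (Eventually.of_forall fun l => weightedCondProb_nonneg hw A l.1)

theorem napProb_union {A B : Set Ω} (h : Disjoint A B) :
    napProb U w (A ∪ B) = napProb U w A + napProb U w B :=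
  Germ.coe_eq.2 (Eventually.of_forall fun l => weightedCondProb_union h l.1)

theorem eventually_subset (hU : (U : Filter (FinP Ω)) ≤ atTop) (s : FinP Ω) : ∀ᶠ l in (U : Filter (FinP Ω)), s.1 ⊆ l.1 :=
  hU (eventually_ge_atTop s)

theorem napProb_eq_one_iff (hU : (U : Filter (FinP Ω)) ≤ atTop) (hw : ∀ ω, 0 < w ω) {A : Set Ω} :
    napProb U w A = 1 ↔ A = Set.univ := by
  refine ⟨fun h => ?_, ?_⟩
  · by_contra hA
    obtain ⟨ω, hωA⟩ := (Set.ne_univ_iff_exists_notMem A).1 hA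
    have h_one : ∀ᶠ l in (U : Filter (FinP Ω)), weightedCondProb w A l.1 = 1 := Germ.coe_eq.1 h
    obtain ⟨l, hl, hωl⟩ := (h_one.and (eventually_subset hU ⟨{ω}, singleton_nonempty ω⟩)).exists
    exact (weightedCondProb_lt_one hw (singleton_subset_iff.1 hωl) hωA).ne hl
  · rintro rfl
    exact Germ.coe_eq.2 (Eventually.of_forall fun l =>
      weightedCondProb_univ (sum_pos (fun ω _ => hw ω) l.2).ne')

theorem const_mul_napProb (hU : (U : Filter (FinP Ω)) ≤ atTop) (hw : ∀ ω, 0 < w ω) (A : Set Ω) (s : FinP Ω) :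
    (↑(weightedCondProb w A s.1) : Germ (U : Filter (FinP Ω)) ℝ) * napProb U w s.1 =
      napProb U w (A ∩ s.1) :=
  Germ.coe_eq.2 <| (eventually_subset hU s).mono fun _ hs =>
    weightedCondProb_mul_weightedCondProb_of_subset hs (sum_pos (fun ω _ => hw ω) s.2).ne' A

end NapProb

/-- For every infinite `Ω` and strictly positive weight function `w`,
there exists a NAP-space `(Ω, R, P, J)` satisfying (NAP0)–(NAP4) whose conditional
probabilities are `φ_A(λ) = (∑_{ω ∈ A∩λ} w ω)/(∑_{ω ∈ λ} w ω)`; in particular the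
NAP axioms are consistent. Here `J` being an ℝ-algebra homomorphism is expressed by
`J` being a ring homomorphism sending constants to their images under `ι`. -/
theorem nap_space_exists
    {Ω : Type} [Infinite Ω] (w : Ω → ℝ) (hw : ∀ ω : Ω, 0 < w ω) :
    ∃ (R : Type) (instR : Field R) (instLO : LinearOrder R)
      (instSOR : IsStrictOrderedRing R) (ι : ℝ →+* R)
      (P : Set Ω → R) (J : (FinP Ω → ℝ) →+* R),
      (∀ r : ℝ, J (fun _ => r) = ι r) ∧
      (∀ A : Set Ω, 0 ≤ P A) ∧
      (∀ A : Set Ω, P A = 1 ↔ A = Set.univ) ∧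
      (∀ A B : Set Ω, A ∩ B = ∅ → P (A ∪ B) = P A + P B) ∧
      (∀ (A : Set Ω) (l : FinP Ω),
        ι ((∑ ω ∈ l.1, Set.indicator A w ω) / (∑ ω ∈ l.1, w ω)) * P (l.1 : Set Ω)
          = P (A ∩ (l.1 : Set Ω))) ∧
      (∀ A : Set Ω,
        P A = J (fun l : FinP Ω =>
          (∑ ω ∈ l.1, Set.indicator A w ω) / (∑ ω ∈ l.1, w ω))) := by
  classical
  let U : Ultrafilter (FinP Ω) := .of atTop
  have hU : (U : Filter (FinP Ω)) ≤ atTop := Ultrafilter.of_le atTop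
  exact ⟨Germ (U : Filter (FinP Ω)) ℝ, inferInstance, inferInstance, inferInstance,
    (Germ.coeRingHom _).comp (Pi.constRingHom _ ℝ), napProb U w, Germ.coeRingHom _,
    fun _ => rfl,
    napProb_nonneg fun ω => (hw ω).le,
    fun _ => napProb_eq_one_iff hU hw,
    fun _ _ h => napProb_union (Set.disjoint_iff_inter_eq_empty.2 h),
    const_mul_napProb hU hw,
    fun _ => rfl⟩
end

section
/- Let (Ω, R, P, J) be a NAP-space and let Λ be a directed set of nonempty finite subsets of Ω (any two elements of Λ are contained in a common element of Λ, and the union of all elements of Λ is Ω). Assume J annihilates every φ ∈ 𝔉 with φ(λ) = 0 for all λ ∈ Λ. Then the Λ-property holds: for all A, B ⊆ Ω, if P(A ∩ λ) = P(B ∩ λ) for every λ ∈ Λ, then P(A) = P(B). -/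
/-!
Two events with the same traces on `Λ` have, by (NAP4), the same conditional probabilities
`φ_A λ = φ_B λ` for `λ ∈ Λ` (division by `P λ` is legitimate since a nonempty set has nonzero
probability), so `φ_A - φ_B` vanishes on `Λ` and is annihilated by `J`; hence
`P A = J φ_A = J φ_B = P B`.
-/

theorem prob_ne_zero_of_nonempty {Ω R : Type*} [AddZeroClass R] [One R] {P : Set Ω → R}
    (nap2 : ∀ A : Set Ω, P A = 1 ↔ A = Set.univ)
    (nap3 : ∀ A B : Set Ω, A ∩ B = ∅ → P (A ∪ B) = P A + P B)
    {A : Set Ω} (hA : A.Nonempty) : P A ≠ 0 := by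
  intro hA0
  have hsplit : P (A ∪ Aᶜ) = P A + P Aᶜ := nap3 _ _ (Set.inter_compl_self A)
  rw [Set.union_compl_self, (nap2 _).mpr rfl, hA0, zero_add] at hsplit
  have hcompl : Aᶜ = Set.univ := (nap2 _).mp hsplit.symm
  exact hA.ne_empty (Set.compl_univ_iff.mp hcompl)

theorem cond_eq_of_inter_eq {Ω R : Type*} [Field R] [Algebra ℝ R] {P : Set Ω → R}
    {φ : Set Ω → FinP Ω → ℝ}
    (nap4a : ∀ (A : Set Ω) (l : FinP Ω),
      algebraMap ℝ R (φ A l) * P (l.1 : Set Ω) = P (A ∩ (l.1 : Set Ω)))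
    {l : FinP Ω} (hl : P (l.1 : Set Ω) ≠ 0) {A B : Set Ω}
    (hAB : P (A ∩ (l.1 : Set Ω)) = P (B ∩ (l.1 : Set Ω))) : φ A l = φ B l := by
  have h := nap4a A l
  rw [hAB, ← nap4a B l] at h
  exact (algebraMap ℝ R).injective (mul_right_cancel₀ hl h)

theorem AlgHom.eq_of_eqOn_of_annihilates {X S : Type*} [Ring S] [Algebra ℝ S]
    (J : (X → ℝ) →ₐ[ℝ] S) {Λ : Set X} (hann : ∀ ψ : X → ℝ, (∀ l ∈ Λ, ψ l = 0) → J ψ = 0)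
    {ψ χ : X → ℝ} (h : Set.EqOn ψ χ Λ) : J ψ = J χ := by
  rw [← sub_eq_zero, ← map_sub]
  exact hann _ fun l hl => sub_eq_zero.mpr (h hl)

theorem nap_Lambda_property_general
    {Ω R : Type*} [Field R] [Algebra ℝ R]
    (P : Set Ω → R) (φ : Set Ω → FinP Ω → ℝ)
    (J : (FinP Ω → ℝ) →ₐ[ℝ] R)
    (nap2 : ∀ A : Set Ω, P A = 1 ↔ A = Set.univ)
    (nap3 : ∀ A B : Set Ω, A ∩ B = ∅ → P (A ∪ B) = P A + P B)
    (nap4a : ∀ (A : Set Ω) (l : FinP Ω),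
      algebraMap ℝ R (φ A l) * P (l.1 : Set Ω) = P (A ∩ (l.1 : Set Ω)))
    (nap4b : ∀ A : Set Ω, P A = J (φ A))
    (Λ : Set (FinP Ω))
    (hann : ∀ ψ : FinP Ω → ℝ, (∀ l ∈ Λ, ψ l = 0) → J ψ = 0) :
    ∀ A B : Set Ω,
      (∀ l ∈ Λ, P (A ∩ ((l : FinP Ω).1 : Set Ω)) = P (B ∩ ((l : FinP Ω).1 : Set Ω))) →
      P A = P B := by
  intro A B hAB
  rw [nap4b A, nap4b B]
  refine J.eq_of_eqOn_of_annihilates hann fun l hl => ?_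
  have hl0 : P (l.1 : Set Ω) ≠ 0 := prob_ne_zero_of_nonempty nap2 nap3 (by exact_mod_cast l.2)
  exact cond_eq_of_inter_eq nap4a hl0 (hAB l hl)

/-- If `Λ` is a directed set of nonempty finite subsets of `Ω` covering
`Ω` and `J` annihilates every function vanishing on `Λ`, then the Λ-property holds:
events having the same probability on every trace over `Λ` have the same probability. -/
theorem nap_Lambda_property
    {Ω R : Type*} [Nonempty Ω] [Field R] [LinearOrder R] [IsStrictOrderedRing R] [Algebra ℝ R]
    (P : Set Ω → R) (φ : Set Ω → FinP Ω → ℝ)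
    (J : (FinP Ω → ℝ) →ₐ[ℝ] R)
    (nap1 : ∀ A : Set Ω, 0 ≤ P A)
    (nap2 : ∀ A : Set Ω, P A = 1 ↔ A = Set.univ)
    (nap3 : ∀ A B : Set Ω, A ∩ B = ∅ → P (A ∪ B) = P A + P B)
    (nap4a : ∀ (A : Set Ω) (l : FinP Ω),
      algebraMap ℝ R (φ A l) * P (l.1 : Set Ω) = P (A ∩ (l.1 : Set Ω)))
    (nap4b : ∀ A : Set Ω, P A = J (φ A))
    (Λ : Set (FinP Ω))
    (hdir : ∀ l₁ ∈ Λ, ∀ l₂ ∈ Λ, ∃ μ ∈ Λ,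
      (l₁ : FinP Ω).1 ⊆ (μ : FinP Ω).1 ∧ (l₂ : FinP Ω).1 ⊆ (μ : FinP Ω).1)
    (hcover : (⋃ l ∈ Λ, ((l : FinP Ω).1 : Set Ω)) = Set.univ)
    (hann : ∀ ψ : FinP Ω → ℝ, (∀ l ∈ Λ, ψ l = 0) → J ψ = 0) :
    ∀ A B : Set Ω,
      (∀ l ∈ Λ, P (A ∩ ((l : FinP Ω).1 : Set Ω)) = P (B ∩ ((l : FinP Ω).1 : Set Ω))) →
      P A = P B :=
  nap_Lambda_property_general P φ J nap2 nap3 nap4a nap4b Λ hann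
end

section
/- Let φ, ψ ∈ 𝔉. If φ and ψ are eventually different on Λ, i.e. there exists λ₀ ∈ Λ such that φ(λ) ≠ ψ(λ) for every λ ∈ Λ with λ₀ ⊆ λ, then J(φ) ≠ J(ψ). -/
section

variable {α R : Type*} [Ring R] [Algebra ℝ R] (J : (α → ℝ) →ₐ[ℝ] R) {Λ : Set α}

theorem AlgHom.map_eq_of_eqOn (hann : ∀ χ : α → ℝ, (∀ l ∈ Λ, χ l = 0) → J χ = 0)
    {f g : α → ℝ} (h : Set.EqOn f g Λ) : J f = J g := by
  rw [← sub_eq_zero, ← map_sub]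
  exact hann _ fun l hl => sub_eq_zero.mpr (h hl)

theorem AlgHom.map_ne_zero_of_ne_zero_on [Nontrivial R]
    (hann : ∀ χ : α → ℝ, (∀ l ∈ Λ, χ l = 0) → J χ = 0) {S : Set α}
    (hS : J (S.indicator fun _ => 1) = 1) {f : α → ℝ} (hf : ∀ l ∈ Λ, l ∈ S → f l ≠ 0) :
    J f ≠ 0 := by
  have hinv : Set.EqOn (f * f⁻¹ * S.indicator fun _ => 1) (S.indicator fun _ => 1) Λ := by
    intro l hl
    by_cases hlS : l ∈ S
    · simp [hlS, hf l hl hlS]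
    · simp [hlS]
  intro hf0
  have h := J.map_eq_of_eqOn hann hinv
  rw [map_mul, map_mul, hf0, zero_mul, zero_mul, hS] at h
  exact zero_ne_one h

end

theorem FinP.indicator_setOf_superset {Ω : Type*} (s : Finset Ω) :
    {l : FinP Ω | s ⊆ l.1}.indicator (fun _ => (1 : ℝ)) =
      ∏ ω ∈ s, fun l : FinP Ω => (l.1 : Set Ω).indicator (fun _ => (1 : ℝ)) ω := by
  funext l
  rw [Finset.prod_apply]
  by_cases hsl : s ⊆ l.1
  · rw [Set.indicator_of_mem hsl]
    exact (Finset.prod_eq_one fun ω hω => Set.indicator_of_mem (hsl hω) _).symm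
  · obtain ⟨ω, hωs, hωl⟩ := Finset.not_subset.mp hsl
    rw [Set.indicator_of_notMem hsl]
    exact (Finset.prod_eq_zero hωs (Set.indicator_of_notMem hωl _)).symm

theorem Lambda_limit_eventually_different_general
    {Ω R : Type*} [Field R] [Algebra ℝ R]
    (J : (FinP Ω → ℝ) →ₐ[ℝ] R)
    (Λ : Set (FinP Ω))
    (hann : ∀ χ : FinP Ω → ℝ, (∀ l ∈ Λ, χ l = 0) → J χ = 0)
    (hfine : ∀ ω : Ω,
      J (fun l : FinP Ω => Set.indicator (l.1 : Set Ω) (fun _ => (1 : ℝ)) ω) = 1)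
    (φ ψ : FinP Ω → ℝ) (l₀ : FinP Ω)
    (hne : ∀ l ∈ Λ, l₀.1 ⊆ (l : FinP Ω).1 → φ l ≠ ψ l) :
    J φ ≠ J ψ := by
  have hsuperset : J ({l : FinP Ω | l₀.1 ⊆ l.1}.indicator fun _ => 1) = 1 := by
    rw [FinP.indicator_setOf_superset, map_prod]
    exact Finset.prod_eq_one fun ω _ => hfine ω
  rw [Ne, ← sub_eq_zero, ← map_sub]
  exact J.map_ne_zero_of_ne_zero_on hann hsuperset fun l hl hsub =>
    sub_ne_zero.mpr (hne l hl hsub)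

/-- If `φ` and `ψ` are eventually different on the directed family `Λ`,
then their Λ-limits differ: `J(φ) ≠ J(ψ)`. -/
theorem Lambda_limit_eventually_different
    {Ω R : Type*} [Infinite Ω] [Field R] [Algebra ℝ R]
    (J : (FinP Ω → ℝ) →ₐ[ℝ] R)
    (Λ : Set (FinP Ω))
    (hdir : ∀ l₁ ∈ Λ, ∀ l₂ ∈ Λ, ∃ μ ∈ Λ,
      (l₁ : FinP Ω).1 ⊆ (μ : FinP Ω).1 ∧ (l₂ : FinP Ω).1 ⊆ (μ : FinP Ω).1)
    (hcover : (⋃ l ∈ Λ, ((l : FinP Ω).1 : Set Ω)) = Set.univ)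
    (hann : ∀ χ : FinP Ω → ℝ, (∀ l ∈ Λ, χ l = 0) → J χ = 0)
    (hfine : ∀ ω : Ω,
      J (fun l : FinP Ω => Set.indicator (l.1 : Set Ω) (fun _ => (1 : ℝ)) ω) = 1)
    (φ ψ : FinP Ω → ℝ) (l₀ : FinP Ω) (hl₀ : l₀ ∈ Λ)
    (hne : ∀ l ∈ Λ, l₀.1 ⊆ (l : FinP Ω).1 → φ l ≠ ψ l) :
    J φ ≠ J ψ :=
  Lambda_limit_eventually_different_general J Λ hann hfine φ ψ l₀ hne
end

section
/- Let φ ∈ 𝔉 and let r₁, …, rₙ be finitely many real numbers such that φ(λ) ∈ {r₁, …, rₙ} for every λ ∈ Λ. Then there exists j ∈ {1, …, n} such that J(φ) equals the image of r_j in R. -/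
/-! A product of linear factors `∏ⱼ (φ - rⱼ)` vanishes at every `λ ∈ Λ`, so its Λ-limit is `0`.
Since `J` is an algebra homomorphism, that limit is `∏ⱼ (J φ - rⱼ)`; as `R` is a field,
one factor vanishes. -/

theorem AlgHom.exists_eq_algebraMap_of_map_prod_sub_eq_zero {K A R ι : Type*} [CommSemiring K]
    [CommRing A] [CommRing R] [IsDomain R] [Algebra K A] [Algebra K R] (f : A →ₐ[K] R)
    (s : Finset ι) (a : A) (r : ι → K)
    (h : f (∏ j ∈ s, (a - algebraMap K A (r j))) = 0) :
    ∃ j ∈ s, f a = algebraMap K R (r j) := by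
  simp only [map_prod, map_sub, AlgHom.commutes, Finset.prod_eq_zero_iff, sub_eq_zero] at h
  exact h

theorem Pi.prod_sub_algebraMap_apply_eq_zero {X K ι : Type*} [CommRing K] (s : Finset ι)
    (φ : X → K) (r : ι → K) {x : X} {j : ι} (hj : j ∈ s) (hx : φ x = r j) :
    (∏ i ∈ s, (φ - algebraMap K (X → K) (r i))) x = 0 := by
  rw [Finset.prod_apply]
  exact Finset.prod_eq_zero hj (by simp [hx])

theorem Lambda_limit_finite_range_general
    {Ω R : Type*} [Field R] [Algebra ℝ R]
    (J : (FinP Ω → ℝ) →ₐ[ℝ] R)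
    (Λ : Set (FinP Ω))
    (hann : ∀ χ : FinP Ω → ℝ, (∀ l ∈ Λ, χ l = 0) → J χ = 0)
    (φ : FinP Ω → ℝ) (n : ℕ) (r : Fin n → ℝ)
    (hrange : ∀ l ∈ Λ, ∃ j : Fin n, φ l = r j) :
    ∃ j : Fin n, J φ = algebraMap ℝ R (r j) := by
  have hvanish : ∀ l ∈ Λ, (∏ j, (φ - algebraMap ℝ (FinP Ω → ℝ) (r j))) l = 0 := fun l hl ↦
    let ⟨j, hj⟩ := hrange l hl
    Pi.prod_sub_algebraMap_apply_eq_zero _ φ r (Finset.mem_univ j) hj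
  obtain ⟨j, -, hj⟩ := J.exists_eq_algebraMap_of_map_prod_sub_eq_zero _ φ r (hann _ hvanish)
  exact ⟨j, hj⟩

/-- If `φ` takes, on the nonempty directed family `Λ`, only the finitely
many values `r 1, …, r n`, then its Λ-limit `J(φ)` is the image in `R` of one of them. -/
theorem Lambda_limit_finite_range
    {Ω R : Type*} [Infinite Ω] [Field R] [Algebra ℝ R]
    (J : (FinP Ω → ℝ) →ₐ[ℝ] R)
    (Λ : Set (FinP Ω)) (hΛ : Λ.Nonempty)
    (hdir : ∀ l₁ ∈ Λ, ∀ l₂ ∈ Λ, ∃ μ ∈ Λ,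
      (l₁ : FinP Ω).1 ⊆ (μ : FinP Ω).1 ∧ (l₂ : FinP Ω).1 ⊆ (μ : FinP Ω).1)
    (hcover : (⋃ l ∈ Λ, ((l : FinP Ω).1 : Set Ω)) = Set.univ)
    (hann : ∀ χ : FinP Ω → ℝ, (∀ l ∈ Λ, χ l = 0) → J χ = 0)
    (φ : FinP Ω → ℝ) (n : ℕ) (r : Fin n → ℝ)
    (hrange : ∀ l ∈ Λ, ∃ j : Fin n, φ l = r j) :
    ∃ j : Fin n, J φ = algebraMap ℝ R (r j) :=
  Lambda_limit_finite_range_general J Λ hann φ n r hrange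
end

section
/- In the de Finetti lottery on the positive integers, the Asymptotic Limit Property holds: if A is a set of positive integers having asymptotic density L, i.e. |A ∩ {1,…,n}|/n → L as n → ∞, then P(A) is infinitely close to L, i.e. for every real ε > 0 one has |P(A) − ι(L)| < ι(ε) in R. -/
/-- The initial segment `{1, …, n}` of the positive integers, as a nonempty finite set. -/
def initSeg (n : ℕ+) : FinP ℕ+ :=
  ⟨Finset.Icc 1 n, Finset.nonempty_Icc.mpr n.one_le⟩

/-! `J` only sees the values of a function along the chain `(λₙ)`, and only eventually. Once
`|φ(λₙ) - L| ≤ ε/2` for `n ≥ N`, clamping `φ` into `[L - ε/2, L + ε/2]` does not change `J φ`,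
and monotonicity traps the clamped function between the constants `L ∓ ε/2`. -/

section LotteryFunctional

variable {R : Type*}

theorem RingHom.strictMono_of_real [Ring R] [LinearOrder R] [IsStrictOrderedRing R]
    (ι : ℝ →+* R) : StrictMono ι := by
  have map_nonneg : ∀ x : ℝ, 0 ≤ x → 0 ≤ ι x := fun x hx => by
    rw [← Real.mul_self_sqrt hx, map_mul]
    exact mul_self_nonneg _
  intro x y hxy
  have hne : ι (y - x) ≠ 0 := (map_ne_zero ι).mpr (sub_pos.mpr hxy).ne'
  have hpos : 0 < ι (y - x) := lt_of_le_of_ne (map_nonneg _ (sub_pos.mpr hxy).le) hne.symm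
  rwa [map_sub, sub_pos] at hpos

variable {X : Type*} (c : ℕ+ → X)

theorem map_le_map_of_le_along [Ring R] [PartialOrder R] [IsOrderedAddMonoid R]
    (J : (X → ℝ) →+* R)
    (hpos : ∀ φ : X → ℝ, (∀ n, 0 ≤ φ (c n)) → 0 ≤ J φ)
    {φ ψ : X → ℝ} (h : ∀ n, φ (c n) ≤ ψ (c n)) : J φ ≤ J ψ := by
  have := hpos (ψ - φ) fun n => sub_nonneg.mpr (h n)
  rwa [map_sub, sub_nonneg] at this

theorem map_eq_map_of_eventuallyEq_along [Ring R] (J : (X → ℝ) →+* R)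
    (hann : ∀ φ : X → ℝ, (∃ N, ∀ n, N ≤ n → φ (c n) = 0) → J φ = 0)
    {φ ψ : X → ℝ} (h : ∃ N, ∀ n, N ≤ n → φ (c n) = ψ (c n)) : J φ = J ψ := by
  obtain ⟨N, hN⟩ := h
  have := hann (φ - ψ) ⟨N, fun n hn => sub_eq_zero.mpr (hN n hn)⟩
  rwa [map_sub, sub_eq_zero] at this

theorem abs_map_sub_le_of_eventually_along [Field R] [LinearOrder R] [IsStrictOrderedRing R]
    (J : (X → ℝ) →+* R) (ι : ℝ →+* R)
    (hconst : ∀ r : ℝ, J (fun _ => r) = ι r)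
    (hann : ∀ φ : X → ℝ, (∃ N, ∀ n, N ≤ n → φ (c n) = 0) → J φ = 0)
    (hpos : ∀ φ : X → ℝ, (∀ n, 0 ≤ φ (c n)) → 0 ≤ J φ)
    {φ : X → ℝ} {L δ : ℝ} (h : ∃ N, ∀ n, N ≤ n → |φ (c n) - L| ≤ δ) :
    |J φ - ι L| ≤ ι δ := by
  obtain ⟨N, hN⟩ := h
  have hδ : 0 ≤ δ := (abs_nonneg _).trans (hN N le_rfl)
  set ψ : X → ℝ := fun x => max (L - δ) (min (L + δ) (φ x))
  have hJψ : J φ = J ψ := by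
    refine map_eq_map_of_eventuallyEq_along c J hann ⟨N, fun n hn => ?_⟩
    obtain ⟨hlo, hhi⟩ := abs_sub_le_iff.mp (hN n hn)
    simp only [ψ, min_eq_right (by linarith : φ (c n) ≤ L + δ),
      max_eq_right (by linarith : L - δ ≤ φ (c n))]
  have hlo : ι (L - δ) ≤ J ψ :=
    hconst (L - δ) ▸ map_le_map_of_le_along c J hpos fun _ => le_max_left _ _
  have hhi : J ψ ≤ ι (L + δ) :=
    hconst (L + δ) ▸ map_le_map_of_le_along c J hpos fun _ =>
      max_le (by linarith) (min_le_left _ _)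
  rw [map_sub] at hlo
  rw [map_add] at hhi
  rw [hJψ, abs_sub_le_iff]
  constructor <;> linarith

end LotteryFunctional

theorem card_initSeg (n : ℕ+) : (initSeg n).1.card = (n : ℕ) := by
  simp [initSeg, PNat.card_Icc]

/-- In the de Finetti lottery on the positive integers, the Asymptotic
Limit Property holds: if `A` has asymptotic density `L`, then `P(A)` is infinitely
close to `ι(L)`.  Here `P(A) = J(λ ↦ |A ∩ λ|/|λ|)`, and `J` annihilates functions
vanishing eventually along the chain `(λₙ)` and is monotone along it. -/
theorem deFinetti_asymptotic_limit_property
    {R : Type*} [Field R] [LinearOrder R] [IsStrictOrderedRing R] (ι : ℝ →+* R)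
    (J : (FinP ℕ+ → ℝ) →+* R)
    (hJconst : ∀ r : ℝ, J (fun _ => r) = ι r)
    (hann : ∀ φ : FinP ℕ+ → ℝ,
      (∃ N : ℕ+, ∀ n : ℕ+, N ≤ n → φ (initSeg n) = 0) → J φ = 0)
    (hpos : ∀ φ : FinP ℕ+ → ℝ, (∀ n : ℕ+, 0 ≤ φ (initSeg n)) → 0 ≤ J φ)
    (A : Set ℕ+) (L : ℝ)
    (hL : Filter.Tendsto
      (fun n : ℕ+ =>
        (∑ ω ∈ Finset.Icc 1 n, Set.indicator A (fun _ => (1 : ℝ)) ω) / ((n : ℕ) : ℝ))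
      Filter.atTop (nhds L)) :
    ∀ ε : ℝ, 0 < ε →
      |J (fun l : FinP ℕ+ =>
          (∑ ω ∈ l.1, Set.indicator A (fun _ => (1 : ℝ)) ω) / (l.1.card : ℝ)) - ι L|
        < ι ε := by
  intro ε hε
  obtain ⟨N, hN⟩ := Metric.tendsto_atTop.mp hL (ε / 2) (half_pos hε)
  have hclose : ∃ N, ∀ n, N ≤ n → |(∑ ω ∈ (initSeg n).1, A.indicator (fun _ => (1 : ℝ)) ω) /
      ((initSeg n).1.card : ℝ) - L| ≤ ε / 2 := by
    refine ⟨N, fun n hn => ?_⟩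
    rw [card_initSeg]
    exact (hN n hn).le
  exact (abs_map_sub_le_of_eventually_along initSeg J ι hJconst hann hpos hclose).trans_lt
    (ι.strictMono_of_real (half_lt_self hε))
end

section
/- Consider the de Finetti lottery on the positive integers produced by the family Λ = {λ_{m!} : m ∈ ℕ}, where λ_N = {1,…,N}. Then for every integer k ≥ 1 and every residue r, the arithmetic progression A = {j ≥ 1 : j ≡ r (mod k)} satisfies P(A) = ι(1/k). In particular each of the sets ℕ_{k,l} = {nk − l : n ≥ 1} (0 ≤ l ≤ k−1) has probability 1/k, and the even and the odd numbers each have probability 1/2. -/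
open Finset

theorem Nat.Ioc_add_mul_filter_modEq_card {k : ℕ} (hk : 0 < k) (a n v : ℕ) :
    #{x ∈ Ioc a (a + k * n) | x ≡ v [MOD k]} = n := by
  have hk' : (k : ℚ) ≠ 0 := by positivity
  rw [← Nat.cast_inj (R := ℤ), Nat.Ioc_filter_modEq_card _ _ hk]
  have : ((a + k * n : ℕ) - v : ℚ) / k = (a - v : ℚ) / k + n := by
    push_cast; field_simp; ring
  rw [this, Int.floor_add_natCast, add_sub_cancel_left, max_eq_left (by positivity)]

theorem PNat.card_filter_Icc (a b : ℕ+) (p : ℕ → Prop) [DecidablePred p] :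
    #((Icc a b).filter fun ω : ℕ+ => p ω) = #{x ∈ Icc (a : ℕ) b | p x} := by
  refine card_nbij' (↑) Nat.toPNat' (fun ω => ?_) (fun x => ?_) (fun ω _ => PNat.coe_toPNat' ω)
    (fun x hx => ?_)
  · simp [← PNat.coe_le_coe]
  · simp only [coe_filter, Set.mem_ofPred_eq, mem_Icc]
    rintro ⟨⟨hax, hxb⟩, hp⟩
    simp [← PNat.coe_le_coe, Nat.toPNat'_coe, a.pos.trans_le hax, hax, hxb, hp]
  · simp only [coe_filter, Set.mem_ofPred_eq, mem_Icc] at hx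
    simp [Nat.toPNat'_coe, a.pos.trans_le hx.1.1]

/-- `|A ∩ λ| / |λ|`, so that `P(A) = J (relFreq A)`. -/
noncomputable def relFreq (A : Set ℕ+) (l : FinP ℕ+) : ℝ :=
  (∑ ω ∈ l.1, A.indicator (fun _ => (1 : ℝ)) ω) / (l.1.card : ℝ)

theorem relFreq_modEq_initSeg_of_dvd {k : ℕ} (hk : 0 < k) (r : ℕ) {N : ℕ+} (hkN : k ∣ (N : ℕ)) :
    relFreq {j : ℕ+ | (j : ℕ) ≡ r [MOD k]} (initSeg N) = 1 / k := by
  obtain ⟨n, hn⟩ := hkN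
  have hn0 : (n : ℝ) ≠ 0 := Nat.cast_ne_zero.mpr (by rintro rfl; simp at hn)
  have hIcc : Icc 1 (N : ℕ) = Ioc 0 (N : ℕ) := Icc_add_one_left_eq_Ioc 0 _
  simp only [relFreq, initSeg, Set.indicator_apply, Set.mem_ofPred_eq, sum_boole]
  rw [PNat.card_filter_Icc 1 N (· ≡ r [MOD k]), PNat.card_Icc, PNat.one_coe, hIcc,
    add_tsub_cancel_right, hn, ← zero_add (k * n), Nat.Ioc_add_mul_filter_modEq_card hk, zero_add]
  push_cast
  field_simp

theorem ringHom_eq_of_eventually_eq_on_factorial_initSeg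
    {R : Type*} [Ring R] (ι : ℝ →+* R) (J : (FinP ℕ+ → ℝ) →+* R)
    (hJconst : ∀ r : ℝ, J (fun _ => r) = ι r)
    (hann : ∀ φ : FinP ℕ+ → ℝ,
      (∃ M : ℕ, ∀ m : ℕ, M ≤ m →
        φ (initSeg ⟨m.factorial, m.factorial_pos⟩) = 0) → J φ = 0)
    {φ : FinP ℕ+ → ℝ} {c : ℝ}
    (h : ∃ M : ℕ, ∀ m : ℕ, M ≤ m → φ (initSeg ⟨m.factorial, m.factorial_pos⟩) = c) :
    J φ = ι c := by
  have hdiff : J (φ - fun _ => c) = 0 := by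
    obtain ⟨M, hM⟩ := h
    exact hann _ ⟨M, fun m hm => sub_eq_zero.mpr (hM m hm)⟩
  rwa [map_sub, hJconst, sub_eq_zero] at hdiff

/-- In the de Finetti lottery on the positive integers produced by the
family `Λ = {λ_{m!}}`, every arithmetic progression `{j ≥ 1 : j ≡ r (mod k)}` has
probability exactly `1/k`.  Here `P(A) = J(λ ↦ |A ∩ λ|/|λ|)` and `J` annihilates
functions vanishing eventually along `(λ_{m!})`. -/
theorem deFinetti_arithmetic_progression
    {R : Type*} [Field R] (ι : ℝ →+* R)
    (J : (FinP ℕ+ → ℝ) →+* R)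
    (hJconst : ∀ r : ℝ, J (fun _ => r) = ι r)
    (hann : ∀ φ : FinP ℕ+ → ℝ,
      (∃ M : ℕ, ∀ m : ℕ, M ≤ m →
        φ (initSeg ⟨m.factorial, m.factorial_pos⟩) = 0) → J φ = 0)
    (k : ℕ) (hk : 1 ≤ k) (r : ℕ) :
    J (fun l : FinP ℕ+ =>
        (∑ ω ∈ l.1, Set.indicator {j : ℕ+ | (j : ℕ) ≡ r [MOD k]}
            (fun _ => (1 : ℝ)) ω) / (l.1.card : ℝ))
      = ι (1 / (k : ℝ)) :=
  ringHom_eq_of_eventually_eq_on_factorial_initSeg ι J hJconst hann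
    (φ := relFreq {j : ℕ+ | (j : ℕ) ≡ r [MOD k]})
    ⟨k, fun _ hm => relFreq_modEq_initSeg_of_dvd hk r (Nat.dvd_factorial hk hm)⟩
end

section
/- Consider the fair lottery on ℚ produced by the family Λ_ℚ = {μ_{m!} : m ∈ ℕ}, where μₙ = {p/n : p ∈ ℤ, |p/n| ≤ n} is a finite set of rationals. Then the numerosity of rational intervals is proportional to their length: for all rationals a ≤ b, J(λ ↦ |[a,b)_ℚ ∩ λ|) = ι(b − a) · J(λ ↦ |[0,1)_ℚ ∩ λ|), where [a,b)_ℚ = {q ∈ ℚ : a ≤ q < b} and |[a,b)_ℚ ∩ λ| denotes the cardinality of [a,b)_ℚ ∩ λ viewed as a real number. -/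
/-- The finite set `μₙ = {p/n : p ∈ ℤ, |p| ≤ n²} ⊆ ℚ`. -/
noncomputable def muQ (n : ℕ) : Finset ℚ :=
  (Finset.Icc (-(n : ℤ) ^ 2) ((n : ℤ) ^ 2)).image fun p : ℤ => (p : ℚ) / (n : ℚ)

lemma muQ_nonempty (n : ℕ) : (muQ n).Nonempty :=
  Finset.Nonempty.image
    (Finset.nonempty_Icc.mpr (neg_le_self (by positivity : (0:ℤ) ≤ (n:ℤ)^2))) _

/-- `μₙ` as a nonempty finite subset of `ℚ`. -/
noncomputable def muQP (n : ℕ) : FinP ℚ := ⟨muQ n, muQ_nonempty n⟩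

/-! Every rational lies in `μ_{m!}` for all large `m`, and for `a ≤ b` both in `μₙ` the
interval `[a, b)` contains exactly `n (b - a)` points of `μₙ`. Hence along `(μ_{m!})` the
numerosity of `[a, b)` is eventually `b - a` times that of `[0, 1)`, and `J` annihilates the
difference. -/

open Filter Finset

theorem map_eq_mul_of_eventually_eq_mul {Ω R : Type*} [Ring R] (ι : ℝ →+* R)
    (J : (Ω → ℝ) →+* R) (hJconst : ∀ r : ℝ, J (fun _ => r) = ι r)
    (s : ℕ → Ω) (hann : ∀ ψ : Ω → ℝ, (∀ᶠ m in atTop, ψ (s m) = 0) → J ψ = 0)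
    {f g : Ω → ℝ} {c : ℝ} (h : ∀ᶠ m in atTop, f (s m) = c * g (s m)) :
    J f = ι c * J g := by
  have hzero : J (f - (fun _ => c) * g) = 0 :=
    hann _ (h.mono fun m hm => by simp [hm])
  rwa [map_sub, map_mul, hJconst, sub_eq_zero] at hzero

theorem mem_muQ_of_den_dvd {q : ℚ} {n : ℕ} (hd : q.den ∣ n) (hq : |q| ≤ n) : q ∈ muQ n := by
  obtain ⟨k, rfl⟩ := hd
  push_cast at hq
  have hnum : (q.num : ℚ) = q * q.den := (Rat.mul_den_eq_num q).symm
  refine mem_image.2 ⟨q.num * k, mem_Icc.2 ?_, ?_⟩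
  · rw [← abs_le]
    have hbound : |q * q.den * k| ≤ ((q.den : ℚ) * k) ^ 2 := by
      rw [mul_assoc, abs_mul, abs_of_nonneg (by positivity : (0:ℚ) ≤ q.den * k), sq]
      exact mul_le_mul_of_nonneg_right hq (by positivity)
    rw [← hnum] at hbound
    exact_mod_cast hbound
  · rcases eq_or_ne k 0 with rfl | hk
    -- `n = 0` forces `q = 0`, which is `p / 0` for any `p`
    · simp_all
    · push_cast
      rw [hnum]
      field_simp

theorem eventually_mem_muQ_factorial (q : ℚ) : ∀ᶠ m : ℕ in atTop, q ∈ muQ m.factorial := by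
  refine eventually_atTop.2 ⟨max q.den ⌈|q|⌉₊, fun m hm => mem_muQ_of_den_dvd ?_ ?_⟩
  · exact Nat.dvd_factorial q.pos (le_of_max_le_left hm)
  · calc |q| ≤ m := Nat.ceil_le.1 (le_of_max_le_right hm)
      _ ≤ (m.factorial : ℚ) := by exact_mod_cast Nat.self_le_factorial m

theorem muQ_filter_Ico {n : ℕ} (hn : 0 < n) {A B : ℤ} (hA : -(n : ℤ) ^ 2 ≤ A)
    (hB : B ≤ (n : ℤ) ^ 2) :
    (muQ n).filter (fun q => (A : ℚ) / n ≤ q ∧ q < B / n)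
      = (Ico A B).image fun p : ℤ => (p : ℚ) / n := by
  have hnQ : (0 : ℚ) < n := by exact_mod_cast hn
  rw [muQ, filter_image]
  congr 1
  ext p
  simp only [mem_filter, mem_Icc, mem_Ico, div_le_div_iff_of_pos_right hnQ,
    div_lt_div_iff_of_pos_right hnQ, Int.cast_le, Int.cast_lt]
  omega

theorem sum_indicator_Ico_muQ {n : ℕ} (hn : 0 < n) {a b : ℚ} (ha : a ∈ muQ n)
    (hb : b ∈ muQ n) (hab : a ≤ b) :
    ∑ q ∈ muQ n, Set.indicator {q : ℚ | a ≤ q ∧ q < b} (fun _ => (1 : ℝ)) q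
      = n * ((b : ℝ) - a) := by
  obtain ⟨A, hA, rfl⟩ := mem_image.1 ha
  obtain ⟨B, hB, rfl⟩ := mem_image.1 hb
  have hnQ : (n : ℚ) ≠ 0 := by positivity
  have hAB : A ≤ B := by
    simpa [div_le_div_iff_of_pos_right (by positivity : (0 : ℚ) < n)] using hab
  rw [sum_indicator_eq_sum_filter]
  simp only [Set.mem_ofPred_eq, sum_const, nsmul_eq_mul, mul_one]
  rw [muQ_filter_Ico hn (mem_Icc.1 hA).1 (mem_Icc.1 hB).2,
    card_image_of_injective _ fun _ _ h => Int.cast_injective ((div_left_inj' hnQ).1 h),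
    Int.card_Ico, ← Int.cast_natCast, Int.toNat_of_nonneg (sub_nonneg.2 hAB)]
  push_cast
  field_simp

/-- In the fair lottery on `ℚ` produced by the family `Λ_ℚ = {μ_{m!}}`,
the numerosity of rational intervals is proportional to their length:
`J(λ ↦ |[a,b)_ℚ ∩ λ|) = ι(b − a) · J(λ ↦ |[0,1)_ℚ ∩ λ|)`.  Here `J` annihilates
functions vanishing eventually along `(μ_{m!})`. -/
theorem lotteryQ_interval_numerosity
    {R : Type*} [Field R] (ι : ℝ →+* R)
    (J : (FinP ℚ → ℝ) →+* R)
    (hJconst : ∀ r : ℝ, J (fun _ => r) = ι r)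
    (hann : ∀ φ : FinP ℚ → ℝ,
      (∃ M : ℕ, ∀ m : ℕ, M ≤ m → φ (muQP (m.factorial)) = 0) → J φ = 0)
    (a b : ℚ) (hab : a ≤ b) :
    J (fun l : FinP ℚ =>
        ∑ q ∈ l.1, Set.indicator {q : ℚ | a ≤ q ∧ q < b} (fun _ => (1 : ℝ)) q)
      = ι ((b : ℝ) - (a : ℝ)) *
        J (fun l : FinP ℚ =>
          ∑ q ∈ l.1, Set.indicator {q : ℚ | 0 ≤ q ∧ q < 1} (fun _ => (1 : ℝ)) q) := by
  refine map_eq_mul_of_eventually_eq_mul ι J hJconst (fun m => muQP m.factorial)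
    (fun φ h => hann φ (eventually_atTop.1 h)) ?_
  filter_upwards [eventually_mem_muQ_factorial a, eventually_mem_muQ_factorial b,
    eventually_mem_muQ_factorial 0, eventually_mem_muQ_factorial 1] with m ha hb h0 h1
  have hn := m.factorial_pos
  simp only [muQP, sum_indicator_Ico_muQ hn ha hb hab,
    sum_indicator_Ico_muQ hn h0 h1 zero_le_one]
  push_cast
  ring
end

section
/- Let n ≥ 1 be a natural number, let θ be a finite set of irrational numbers lying in the interval [0,1], and let μ_{n,θ} = μₙ ∪ {(p + a)/n : p ∈ ℤ, −n² ≤ p ≤ n² − 1, a ∈ θ}, where μₙ = {p/n : p ∈ ℤ, |p| ≤ n²}. Then for all real numbers x ≤ y with −n ≤ x and y ≤ n, the number of elements of μ_{n,θ} in the interval [x, y) satisfies (n(y − x) − 1)(|θ| + 1) ≤ |[x,y) ∩ μ_{n,θ}| ≤ (n(y − x) + 2)(|θ| + 1). -/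
/-- The finite set `μₙ = {p/n : p ∈ ℤ, |p| ≤ n²} ⊆ ℝ`. -/
noncomputable def muR (n : ℕ) : Finset ℝ :=
  (Finset.Icc (-(n : ℤ) ^ 2) ((n : ℤ) ^ 2)).image fun p : ℤ => (p : ℝ) / (n : ℝ)

/-- The finite set `μ_{n,θ} = μₙ ∪ {(p + a)/n : p ∈ ℤ, −n² ≤ p ≤ n² − 1, a ∈ θ} ⊆ ℝ`. -/
noncomputable def muRtheta (n : ℕ) (θ : Finset ℝ) : Finset ℝ :=
  muR n ∪
    ((Finset.Icc (-(n : ℤ) ^ 2) ((n : ℤ) ^ 2 - 1)) ×ˢ θ).image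
      fun pa : ℤ × ℝ => ((pa.1 : ℝ) + pa.2) / (n : ℝ)

/-!
Since `0` and `1` are rational, `θ ⊆ (0, 1)`, and `μ_{n,θ}` consists of the points `(p + a)/n` with
`a ∈ {0} ∪ θ ⊆ [0, 1)`; the map `(p, a) ↦ p + a` is injective on `ℤ × [0, 1)`. For each `a`, the
point `(p + a)/n` lies in `[x, y)` iff `p ∈ [n x - a, n y - a)`, a half-open interval of length
`n (y - x)`, which contains between `n (y - x) - 1` and `n (y - x) + 1` integers. As
`[x, y) ⊆ [-n, n]`, all these `p` lie in the index range used in the definition of `μ_{n,θ}`.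
-/

open Finset

namespace Int

theorem mem_Ico_ceil_iff {K : Type*} [Ring K] [LinearOrder K] [FloorRing K] {c d : K} {p : ℤ} :
    p ∈ Ico ⌈c⌉ ⌈d⌉ ↔ c ≤ p ∧ (p : K) < d := by
  rw [mem_Ico, ceil_le, lt_ceil]

variable {K : Type*} [Field K] [LinearOrder K] [IsStrictOrderedRing K] [FloorRing K]

theorem sub_sub_one_lt_card_Ico_ceil (c d : K) : d - c - 1 < #(Ico ⌈c⌉ ⌈d⌉) := by
  have hcard : ((⌈d⌉ - ⌈c⌉ : ℤ) : K) ≤ #(Ico ⌈c⌉ ⌈d⌉) := by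
    rw [card_Ico]; exact_mod_cast self_le_toNat _
  push_cast at hcard
  linarith [ceil_lt_add_one c, le_ceil d]

theorem card_Ico_ceil_lt_sub_add_one {c d : K} (h : c ≤ d) : (#(Ico ⌈c⌉ ⌈d⌉) : K) < d - c + 1 := by
  have hcard : (#(Ico ⌈c⌉ ⌈d⌉) : K) = ((⌈d⌉ - ⌈c⌉ : ℤ) : K) := by
    rw [card_Ico, ← cast_natCast, toNat_of_nonneg (sub_nonneg.2 (ceil_mono h))]
  rw [hcard]; push_cast
  linarith [le_ceil c, ceil_lt_add_one c, le_ceil d, ceil_lt_add_one d]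

theorem injOn_cast_add_Ico :
    Set.InjOn (fun q : Σ _ : K, ℤ => (q.2 : K) + q.1) {q | q.1 ∈ Set.Ico 0 1} := by
  rintro ⟨a, p⟩ ha ⟨b, q⟩ hb h
  have hab : a = b := by
    simpa [fract_intCast_add, fract_eq_self.2 ha, fract_eq_self.2 hb] using
      congrArg fract h
  subst hab
  simpa using h

end Int

section muRtheta

variable {n : ℕ} {x y a : ℝ} {p : ℤ}

theorem div_mem_Ico_iff_mem_Ico_ceil (hn : 0 < n) :
    x ≤ ((p : ℝ) + a) / n ∧ ((p : ℝ) + a) / n < y ↔ p ∈ Ico ⌈n * x - a⌉ ⌈n * y - a⌉ := by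
  have hn' : (0 : ℝ) < n := by exact_mod_cast hn
  rw [Int.mem_Ico_ceil_iff, le_div_iff₀ hn', div_lt_iff₀ hn']
  constructor <;> rintro ⟨h₁, h₂⟩ <;> constructor <;> linarith

theorem mem_Icc_of_mem_Ico_ceil (ha : a ∈ Set.Ico 0 1) (hx : -(n : ℝ) ≤ x) (hy : y ≤ n)
    (hp : p ∈ Ico ⌈n * x - a⌉ ⌈n * y - a⌉) : p ∈ Icc (-(n : ℤ) ^ 2) ((n : ℤ) ^ 2 - 1) := by
  obtain ⟨ha₀, ha₁⟩ := ha
  obtain ⟨hpx, hpy⟩ := Int.mem_Ico_ceil_iff.1 hp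
  have hn : (0 : ℝ) ≤ n := n.cast_nonneg
  have hlo : ((-(n : ℤ) ^ 2 - 1 : ℤ) : ℝ) < p := by push_cast; nlinarith
  have hhi : (p : ℝ) < ((n ^ 2 : ℤ) : ℝ) := by push_cast; nlinarith
  have := Int.cast_lt.1 hlo
  have := Int.cast_lt.1 hhi
  rw [mem_Icc]
  omega

theorem filter_muRtheta_eq_image_sigma (hn : 0 < n) {θ : Finset ℝ} (hθ : ∀ a ∈ θ, a ∈ Set.Ico 0 1)
    (hx : -(n : ℝ) ≤ x) (hy : y ≤ n) :
    (muRtheta n θ).filter (fun t => x ≤ t ∧ t < y) =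
      ((insert 0 θ).sigma fun a => Ico ⌈n * x - a⌉ ⌈n * y - a⌉).image
        fun q => ((q.2 : ℝ) + q.1) / n := by
  ext t
  simp only [muRtheta, muR, mem_filter, mem_union, mem_image, mem_sigma, mem_insert, mem_product,
    Prod.exists, Sigma.exists]
  constructor
  · rintro ⟨⟨p, -, rfl⟩ | ⟨p, a, ⟨-, ha⟩, rfl⟩, ht⟩
    · rw [← add_zero (p : ℝ)] at ht
      exact ⟨0, p, ⟨.inl rfl, (div_mem_Ico_iff_mem_Ico_ceil hn).1 ht⟩, by simp⟩
    · exact ⟨a, p, ⟨.inr ha, (div_mem_Ico_iff_mem_Ico_ceil hn).1 ht⟩, rfl⟩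
  · rintro ⟨a, p, ⟨rfl | ha, hp⟩, rfl⟩
    · have hp' := mem_Icc_of_mem_Ico_ceil (by simp) hx hy hp
      refine ⟨.inl ⟨p, Icc_subset_Icc_right (by omega) hp', by simp⟩, ?_⟩
      exact (div_mem_Ico_iff_mem_Ico_ceil hn).2 hp
    · exact ⟨.inr ⟨p, a, ⟨mem_Icc_of_mem_Ico_ceil (hθ a ha) hx hy hp, ha⟩, rfl⟩,
        (div_mem_Ico_iff_mem_Ico_ceil hn).2 hp⟩

theorem card_filter_muRtheta (hn : 0 < n) {θ : Finset ℝ} (hθ : ∀ a ∈ θ, a ∈ Set.Ico 0 1)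
    (hx : -(n : ℝ) ≤ x) (hy : y ≤ n) :
    #((muRtheta n θ).filter (fun t => x ≤ t ∧ t < y)) =
      ∑ a ∈ insert 0 θ, #(Ico ⌈n * x - a⌉ ⌈n * y - a⌉) := by
  rw [filter_muRtheta_eq_image_sigma hn hθ hx hy, card_image_of_injOn, card_sigma]
  have hn' : (n : ℝ) ≠ 0 := by exact_mod_cast hn.ne'
  have hmem : ∀ q ∈ (insert 0 θ).sigma fun a => Ico ⌈n * x - a⌉ ⌈n * y - a⌉,
      q.1 ∈ Set.Ico (0 : ℝ) 1 := fun q hq => by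
    rcases mem_insert.1 (mem_sigma.1 hq).1 with ha | ha
    · simp [ha]
    · exact hθ _ ha
  exact fun q hq r hr h => Int.injOn_cast_add_Ico (hmem q hq) (hmem r hr) ((div_left_inj' hn').1 h)

end muRtheta

/-- counting estimate for the fair lottery on `ℝ`: for `n ≥ 1`, `θ` a
finite set of irrationals in `[0,1]`, and reals `x ≤ y` with `−n ≤ x` and `y ≤ n`,
the number of points of `μ_{n,θ}` in `[x, y)` is between `(n(y−x) − 1)(|θ| + 1)` and
`(n(y−x) + 2)(|θ| + 1)`. -/
theorem muRtheta_interval_count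
    (n : ℕ) (hn : 1 ≤ n) (θ : Finset ℝ)
    (hθ : ∀ a ∈ θ, Irrational a ∧ a ∈ Set.Icc (0 : ℝ) 1)
    (x y : ℝ) (hxy : x ≤ y) (hx : -(n : ℝ) ≤ x) (hy : y ≤ (n : ℝ)) :
    ((n : ℝ) * (y - x) - 1) * ((θ.card : ℝ) + 1)
        ≤ (((muRtheta n θ).filter fun t => x ≤ t ∧ t < y).card : ℝ) ∧
    (((muRtheta n θ).filter fun t => x ≤ t ∧ t < y).card : ℝ)
        ≤ ((n : ℝ) * (y - x) + 2) * ((θ.card : ℝ) + 1) := by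
  have hθIco : ∀ a ∈ θ, a ∈ Set.Ico (0 : ℝ) 1 := fun a ha =>
    ⟨(hθ a ha).2.1, (hθ a ha).2.2.lt_of_ne fun h => (hθ a ha).1.ne_one h⟩
  have hcard : ((insert 0 θ).card : ℝ) = θ.card + 1 := by
    rw [card_insert_of_notMem fun h => (hθ 0 h).1.ne_zero rfl]; push_cast; rfl
  have hlen : ∀ a : ℝ, n * y - a - (n * x - a) = n * (y - x) := fun a => by ring
  have hlo : ∀ a : ℝ, n * (y - x) - 1 ≤ (#(Ico ⌈n * x - a⌉ ⌈n * y - a⌉) : ℝ) := fun a => by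
    simpa [hlen] using (Int.sub_sub_one_lt_card_Ico_ceil (n * x - a) (n * y - a)).le
  have hhi : ∀ a : ℝ, (#(Ico ⌈n * x - a⌉ ⌈n * y - a⌉) : ℝ) ≤ n * (y - x) + 2 := fun a => by
    have := Int.card_Ico_ceil_lt_sub_add_one (sub_le_sub_right
      (mul_le_mul_of_nonneg_left hxy n.cast_nonneg) a)
    linarith [hlen a]
  rw [card_filter_muRtheta hn hθIco hx hy, ← hcard, Nat.cast_sum]
  constructor
  · calc (n * (y - x) - 1) * ((insert 0 θ).card : ℝ)
        = ∑ _a ∈ insert 0 θ, (n * (y - x) - 1) := by rw [sum_const, nsmul_eq_mul, mul_comm]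
      _ ≤ _ := sum_le_sum fun a _ => hlo a
  · calc _ ≤ ∑ _a ∈ insert 0 θ, (n * (y - x) + 2) := sum_le_sum fun a _ => hhi a
      _ = _ := by rw [sum_const, nsmul_eq_mul, mul_comm]
end

section
/- Consider the fair lottery on the space Ω = {H,T}^ℕ of infinite coin-toss sequences produced by the family Λ_CT = {λ_{N,σ}}, where for N ∈ ℕ and a nonempty finite set σ of sequences, λ_{N,σ} = {b⊛c : b ∈ {H,T}^N, c ∈ σ} and b⊛c denotes the sequence beginning with the finite string b followed by the sequence c. Then for every n ∈ ℕ, every injective n-tuple of indices i₁,…,iₙ ∈ ℕ and every n-tuple of values t₁,…,tₙ ∈ {H,T}, the cylindrical set C = {ω ∈ Ω : ω_{i_k} = t_k for k = 1,…,n} satisfies P(C) = ι(2^{−n}). -/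
/-- `λ_{N,σ}`: the finite set of all sequences `b⊛c` obtained from a string
`b ∈ {H,T}^N` (here `Bool^N`) followed by a sequence `c ∈ σ`. -/
noncomputable def lamCT (N : ℕ) (σ : Finset (ℕ → Bool)) : Finset (ℕ → Bool) :=
  letI := Classical.decEq (ℕ → Bool)
  ((Finset.univ : Finset (Fin N → Bool)) ×ˢ σ).image
    fun bc n => if h : n < N then bc.1 ⟨n, h⟩ else bc.2 (n - N)

open Finset Function

theorem Fintype.card_filter_forall_comp_eq {α ι β : Type*} [Fintype α] [DecidableEq α]
    [Fintype β] [Fintype ι] {j : ι → α} (hj : Injective j) (t : ι → β)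
    [DecidablePred fun f : α → β => ∀ k, f (j k) = t k] :
    #{f : α → β | ∀ k, f (j k) = t k} = card β ^ (card α - card ι) := by
  let e : {f : α → β // ∀ k, f (j k) = t k} ≃ ({x // x ∉ Set.range j} → β) :=
    { toFun := fun f x => f.1 x
      invFun := fun g => ⟨fun x => if h : x ∈ Set.range j then t h.choose else g ⟨x, h⟩,
        fun k => by simp [hj.eq_iff]⟩
      left_inv := fun f => by
        ext x
        by_cases h : x ∈ Set.range j
        · obtain ⟨k, rfl⟩ := h; simp [hj.eq_iff, f.2]
        · simp [h]
      right_inv := fun g => by ext x; simp [x.2] }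
  rw [← Fintype.card_subtype, Fintype.card_congr e, Fintype.card_fun, Fintype.card_subtype_compl,
    Set.card_range_of_injective hj]

def finPrepend {β : Type*} {N : ℕ} (b : Fin N → β) (c : ℕ → β) : ℕ → β :=
  fun n => if h : n < N then b ⟨n, h⟩ else c (n - N)

theorem finPrepend_of_lt {β : Type*} {N n : ℕ} (b : Fin N → β) (c : ℕ → β) (h : n < N) :
    finPrepend b c n = b ⟨n, h⟩ :=
  dif_pos h

theorem finPrepend_add {β : Type*} {N : ℕ} (b : Fin N → β) (c : ℕ → β) (n : ℕ) :
    finPrepend b c (n + N) = c n := by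
  simp [finPrepend]

theorem finPrepend_injective {β : Type*} (N : ℕ) :
    Injective fun bc : (Fin N → β) × (ℕ → β) => finPrepend bc.1 bc.2 := by
  rintro ⟨b, c⟩ ⟨b', c'⟩ h
  simp only at h
  ext m
  · simpa only [finPrepend_of_lt _ _ m.isLt] using congrFun h m
  · simpa only [finPrepend_add] using congrFun h (m + N)

theorem lamCT_eq_image [DecidableEq (ℕ → Bool)] (N : ℕ) (σ : Finset (ℕ → Bool)) :
    lamCT N σ =
      (univ ×ˢ σ).image fun bc : (Fin N → Bool) × (ℕ → Bool) => finPrepend bc.1 bc.2 := by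
  unfold lamCT; congr!

theorem card_lamCT (N : ℕ) (σ : Finset (ℕ → Bool)) : #(lamCT N σ) = 2 ^ N * #σ := by
  classical
  rw [lamCT_eq_image, card_image_of_injective _ (finPrepend_injective N), card_product]
  simp

theorem card_filter_lamCT {n N : ℕ} {i : Fin n → ℕ} (hi : Injective i) (hN : ∀ k, i k < N)
    (t : Fin n → Bool) (σ : Finset (ℕ → Bool)) :
    #{ω ∈ lamCT N σ | ∀ k, ω (i k) = t k} = 2 ^ (N - n) * #σ := by
  classical
  let j : Fin n → Fin N := fun k => ⟨i k, hN k⟩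
  have hj : Injective j := fun a b h => hi (Fin.val_eq_of_eq h)
  have hfilter : {bc ∈ (univ ×ˢ σ : Finset ((Fin N → Bool) × (ℕ → Bool))) |
      ∀ k, finPrepend bc.1 bc.2 (i k) = t k} =
        ({b | ∀ k, b (j k) = t k} : Finset (Fin N → Bool)) ×ˢ σ := by
    ext ⟨b, c⟩
    simp [finPrepend_of_lt _ _ (hN _), j, and_comm]
  rw [lamCT_eq_image, filter_image, card_image_of_injective _ (finPrepend_injective N), hfilter,
    card_product, Fintype.card_filter_forall_comp_eq hj]
  simp

theorem nonempty_of_lamCT_nonempty {N : ℕ} {σ : Finset (ℕ → Bool)} (h : (lamCT N σ).Nonempty) :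
    σ.Nonempty := by
  classical
  rw [lamCT_eq_image, image_nonempty] at h
  exact h.snd

theorem cylinder_frequency_lamCT {n N : ℕ} {i : Fin n → ℕ} (hi : Injective i)
    (hN : ∀ k, i k < N) (t : Fin n → Bool) {σ : Finset (ℕ → Bool)} (hσ : σ.Nonempty) :
    (∑ ω ∈ lamCT N σ, Set.indicator {ω : ℕ → Bool | ∀ k, ω (i k) = t k} (fun _ => (1 : ℝ)) ω)
      / #(lamCT N σ) = ((2 : ℝ) ^ n)⁻¹ := by
  have hnN : n ≤ N := by
    simpa using Fintype.card_le_of_injective (fun k => (⟨i k, hN k⟩ : Fin N))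
      fun a b h => hi (Fin.val_eq_of_eq h)
  simp only [Set.indicator_apply, Set.mem_ofPred_eq]
  rw [sum_boole, card_filter_lamCT hi hN, card_lamCT]
  have hσ0 : (#σ : ℝ) ≠ 0 := by exact_mod_cast hσ.card_ne_zero
  push_cast
  rw [pow_sub₀ _ two_ne_zero hnN]
  field_simp

theorem map_eq_of_eventually_eq_const {R : Type*} [Ring R] (ι : ℝ →+* R)
    (J : (FinP (ℕ → Bool) → ℝ) →+* R) (hJconst : ∀ r : ℝ, J (fun _ => r) = ι r)
    (hann : ∀ φ : FinP (ℕ → Bool) → ℝ,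
      (∃ N₀ : ℕ, ∀ N : ℕ, N₀ ≤ N → ∀ l : FinP (ℕ → Bool),
        (∃ σ : Finset (ℕ → Bool), l.1 = lamCT N σ) → φ l = 0) → J φ = 0)
    {φ : FinP (ℕ → Bool) → ℝ} {r : ℝ}
    (h : ∃ N₀ : ℕ, ∀ N : ℕ, N₀ ≤ N → ∀ l : FinP (ℕ → Bool),
      (∃ σ : Finset (ℕ → Bool), l.1 = lamCT N σ) → φ l = r) :
    J φ = ι r := by
  obtain ⟨N₀, hN₀⟩ := h
  have hdiff : J (φ - fun _ => r) = 0 :=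
    hann _ ⟨N₀, fun N hN l hl => sub_eq_zero.mpr (hN₀ N hN l hl)⟩
  rwa [map_sub, hJconst, sub_eq_zero] at hdiff

/-- In the fair lottery on the coin-toss space `Ω = {H,T}^ℕ` produced
by the family `Λ_CT = {λ_{N,σ}}`, every cylindrical set of codimension `n`, given by
injective indices `i₁,…,iₙ` and values `t₁,…,tₙ`, has probability `2^{−n}`.  Here
`P(A) = J(λ ↦ |A ∩ λ|/|λ|)` and `J` annihilates every function vanishing on all
`λ_{N,σ}` with `N` large enough. -/
theorem coinToss_cylinder_probability
    {R : Type*} [Field R] (ι : ℝ →+* R)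
    (J : (FinP (ℕ → Bool) → ℝ) →+* R)
    (hJconst : ∀ r : ℝ, J (fun _ => r) = ι r)
    (hann : ∀ φ : FinP (ℕ → Bool) → ℝ,
      (∃ N₀ : ℕ, ∀ N : ℕ, N₀ ≤ N → ∀ l : FinP (ℕ → Bool),
        (∃ σ : Finset (ℕ → Bool), l.1 = lamCT N σ) → φ l = 0) → J φ = 0)
    (n : ℕ) (i : Fin n → ℕ) (hi : Function.Injective i) (t : Fin n → Bool) :
    J (fun l : FinP (ℕ → Bool) =>
        (∑ ω ∈ l.1, Set.indicator {ω : ℕ → Bool | ∀ k : Fin n, ω (i k) = t k}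
            (fun _ => (1 : ℝ)) ω) / (l.1.card : ℝ))
      = ι (((2 : ℝ) ^ n)⁻¹) := by
  refine map_eq_of_eventually_eq_const ι J hJconst hann
    ⟨univ.sup i + 1, fun N hN l ⟨σ, hl⟩ => ?_⟩
  have hσ : σ.Nonempty := nonempty_of_lamCT_nonempty (hl ▸ l.2)
  rw [hl]
  exact cylinder_frequency_lamCT hi (fun k => (le_sup (mem_univ k)).trans_lt hN) t hσ
end
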